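/- arXiv:1412.4278 — 12 statements merged into one kernel-verified Lean document; each statement's English description precedes it below -/
import Mathlib

section
/- Let x₀ ∈ (x_min, x_max) and let x : [0,∞) → ℝ be differentiable with x(0) = x₀ and with −φ(x(t)) − g ≤ x'(t) ≤ 1 − φ(x(t)) − g for all t ≥ 0 (i.e., x is a trajectory of the control system ẋ = u − φ(x) − g for some control u(t) ∈ [0,1]). Then x(t) ∈ (x_min, x_max) for all t ≥ 0. Consequently, at any time t where x'(t) = 1 − φ(x(t)) − g (control u = 1) one has x'(t) > 0, and at any time t where x'(t) = −φ(x(t)) − g (control u = 0) one has x'(t) < 0. -/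
/-!
Since `φ` is differentiable at `x_max`, near `x_max` it satisfies
`φ(x_max) - φ(x) ≤ K (x_max - x)`. Along a trajectory, `y = x_max - x` therefore satisfies
`y' ≥ -K y` as long as `y` is small and positive, so by comparison with an exponential `y` stays
positive; symmetrically at `x_min`. Strict monotonicity of `φ` then fixes the sign of the velocity
under the extreme controls.
-/

open Set

theorem pos_of_deriv_ge_neg_mul_near_zero {y y' : ℝ → ℝ} {a K ε : ℝ}
    (hy : ∀ t ≥ a, HasDerivAt y (y' t) t) (hε : 0 < ε) (ha : 0 < y a)
    (hy' : ∀ t ≥ a, 0 < y t → y t < ε → -(K * y t) ≤ y' t) :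
    ∀ t ≥ a, 0 < y t := by
  set c := min (y a) (ε / 2)
  have hc : 0 < c := lt_min ha (half_pos hε)
  -- a strict subsolution of `y' = -K y` starting below `y a` and staying below `ε`
  set B : ℝ → ℝ := fun t => c * Real.exp (-(|K| + 1) * (t - a))
  have hB : ∀ t, HasDerivAt B (-(|K| + 1) * B t) t := fun t =>
    ((((hasDerivAt_id' t).sub_const a).const_mul (-(|K| + 1))).exp.const_mul c).congr_deriv
      (by simp only [B]; ring)
  have hB_pos : ∀ t, 0 < B t := fun t => mul_pos hc (Real.exp_pos _)
  have hB_lt : ∀ t ≥ a, B t < ε := fun t ht =>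
    calc B t ≤ c := mul_le_of_le_one_right hc.le
          (Real.exp_le_one_iff.2 (by nlinarith [abs_nonneg K]))
      _ ≤ ε / 2 := min_le_right _ _
      _ < ε := half_lt_self hε
  intro t ht
  have hfence := image_le_of_deriv_right_lt_deriv_boundary (a := a) (b := t)
    (f := fun s => -y s) (f' := fun s => -y' s) (B := fun s => -B s)
    (B' := fun s => -(-(|K| + 1) * B s))
    (fun s hs => (hy s hs.1).continuousAt.neg.continuousWithinAt)
    (fun s hs => (hy s hs.1).neg.hasDerivWithinAt)
    (by simp [B, c]) (fun s => (hB s).neg) ?_ ⟨ht, le_rfl⟩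
  · linarith [hB_pos t]
  · intro s hs hys
    have hys : y s = B s := neg_inj.1 hys
    have hy's := hy' s hs.1 (hys ▸ hB_pos s) (hys ▸ hB_lt s hs.1)
    have hKB := mul_le_mul_of_nonneg_right (le_abs_self K) (hB_pos s).le
    rw [hys] at hy's
    linarith [hB_pos s]

theorem DifferentiableAt.exists_abs_sub_le_mul_abs_sub {φ : ℝ → ℝ} {p : ℝ}
    (hφ : DifferentiableAt ℝ φ p) :
    ∃ K, ∃ ε > 0, ∀ z, |z - p| < ε → |φ z - φ p| ≤ K * |z - p| := by
  obtain ⟨K, hK⟩ := hφ.hasDerivAt.isBigO_sub.bound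
  obtain ⟨ε, hε, hball⟩ := Metric.eventually_nhds_iff.1 hK
  exact ⟨K, ε, hε, fun z hz => hball hz⟩

theorem lt_of_deriv_le_sub {φ x x' : ℝ → ℝ} {a p : ℝ} (hφ : DifferentiableAt ℝ φ p)
    (hx : ∀ t ≥ a, HasDerivAt x (x' t) t) (ha : x a < p)
    (hx' : ∀ t ≥ a, x' t ≤ φ p - φ (x t)) : ∀ t ≥ a, x t < p := by
  obtain ⟨K, ε, hε, hK⟩ := hφ.exists_abs_sub_le_mul_abs_sub
  have hgap := pos_of_deriv_ge_neg_mul_near_zero (y := fun t => p - x t) (K := K)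
    (fun t ht => (hx t ht).const_sub p) hε (sub_pos.2 ha) fun t ht hpos hsmall => by
      have hdist : |x t - p| = p - x t := by rw [abs_sub_comm]; exact abs_of_pos hpos
      have hlip := hK (x t) (by rwa [hdist])
      rw [hdist] at hlip
      have := neg_le_abs (φ (x t) - φ p)
      linarith [hx' t ht]
  exact fun t ht => sub_pos.1 (hgap t ht)

theorem lt_of_sub_le_deriv {φ x x' : ℝ → ℝ} {a p : ℝ} (hφ : DifferentiableAt ℝ φ p)
    (hx : ∀ t ≥ a, HasDerivAt x (x' t) t) (ha : p < x a)
    (hx' : ∀ t ≥ a, φ p - φ (x t) ≤ x' t) : ∀ t ≥ a, p < x t := by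
  obtain ⟨K, ε, hε, hK⟩ := hφ.exists_abs_sub_le_mul_abs_sub
  have hgap := pos_of_deriv_ge_neg_mul_near_zero (y := fun t => x t - p) (K := K)
    (fun t ht => (hx t ht).sub_const p) hε (sub_pos.2 ha) fun t ht hpos hsmall => by
      have hdist : |x t - p| = x t - p := abs_of_pos hpos
      have hlip := hK (x t) (by rwa [hdist])
      rw [hdist] at hlip
      have := le_abs_self (φ (x t) - φ p)
      linarith [hx' t ht]
  exact fun t ht => sub_pos.1 (hgap t ht)

theorem stmt_0_general (φ : ℝ → ℝ) (g xmin xmax : ℝ)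
    (hφ' : ∀ y : ℝ, 0 < deriv φ y)
    (hmin : φ xmin = -g) (hmax : φ xmax = 1 - g)
    (x₀ : ℝ) (hx₀ : x₀ ∈ Set.Ioo xmin xmax)
    (x : ℝ → ℝ) (hxdiff : Differentiable ℝ x) (hx0 : x 0 = x₀)
    (hdyn : ∀ t : ℝ, 0 ≤ t →
      -(φ (x t)) - g ≤ deriv x t ∧ deriv x t ≤ 1 - φ (x t) - g) :
    (∀ t : ℝ, 0 ≤ t → x t ∈ Set.Ioo xmin xmax) ∧
    (∀ t : ℝ, 0 ≤ t → deriv x t = 1 - φ (x t) - g → 0 < deriv x t) ∧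
    (∀ t : ℝ, 0 ≤ t → deriv x t = -(φ (x t)) - g → deriv x t < 0) := by
  have hφ_mono : StrictMono φ := strictMono_of_deriv_pos hφ'
  have hφ_diff : ∀ p, DifferentiableAt ℝ φ p := fun p =>
    differentiableAt_of_deriv_ne_zero (hφ' p).ne'
  have hx : ∀ t ≥ 0, HasDerivAt x (deriv x t) t := fun t _ => (hxdiff t).hasDerivAt
  have hinv : ∀ t ≥ 0, x t ∈ Ioo xmin xmax := fun t ht =>
    ⟨lt_of_sub_le_deriv (hφ_diff xmin) hx (hx0 ▸ hx₀.1)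
        (fun s hs => by rw [hmin]; linarith [(hdyn s hs).1]) t ht,
      lt_of_deriv_le_sub (hφ_diff xmax) hx (hx0 ▸ hx₀.2)
        (fun s hs => by rw [hmax]; linarith [(hdyn s hs).2]) t ht⟩
  refine ⟨hinv, fun t ht hu => ?_, fun t ht hu => ?_⟩
  · linarith [hφ_mono (hinv t ht).2]
  · linarith [hφ_mono (hinv t ht).1]

/-- Trajectories of the control system stay in (x_min, x_max); hence
    with control u = 1 the velocity derivative is positive, with u = 0 negative. -/
theorem stmt_0 (φ : ℝ → ℝ) (g xmin xmax : ℝ)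
    (hφ0 : φ 0 = 0)
    (hφdiff : Differentiable ℝ φ)
    (hφ' : ∀ y : ℝ, 0 < deriv φ y)
    (hφC2 : ContDiffOn ℝ 2 φ {(0:ℝ)}ᶜ)
    (hφ''neg : ∀ y : ℝ, y < 0 → deriv (deriv φ) y < 0)
    (hφ''pos : ∀ y : ℝ, 0 < y → 0 < deriv (deriv φ) y)
    (hg0 : 0 < g) (hg1 : g < 1)
    (hxminneg : xmin < 0) (hxmaxpos : 0 < xmax)
    (hmin : φ xmin = -g) (hmax : φ xmax = 1 - g)
    (x₀ : ℝ) (hx₀ : x₀ ∈ Set.Ioo xmin xmax)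
    (x : ℝ → ℝ) (hxdiff : Differentiable ℝ x) (hx0 : x 0 = x₀)
    (hdyn : ∀ t : ℝ, 0 ≤ t →
      -(φ (x t)) - g ≤ deriv x t ∧ deriv x t ≤ 1 - φ (x t) - g) :
    (∀ t : ℝ, 0 ≤ t → x t ∈ Set.Ioo xmin xmax) ∧
    (∀ t : ℝ, 0 ≤ t → deriv x t = 1 - φ (x t) - g → 0 < deriv x t) ∧
    (∀ t : ℝ, 0 ≤ t → deriv x t = -(φ (x t)) - g → deriv x t < 0) :=
  stmt_0_general φ g xmin xmax hφ' hmin hmax x₀ hx₀ x hxdiff hx0 hdyn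
end

section
/- Let T > 0, let a : [0,T] → ℝ be continuous, and let ψ : [0,T] → ℝ be differentiable with ψ'(t) = −1 + ψ(t)·a(t) for all t ∈ [0,T] and ψ(T) = 0. Then ψ(t) > 0 for all t ∈ [0,T). -/
open Set Filter Topology

theorem HasDerivWithinAt.nonneg_of_forall_Ioo_le {f : ℝ → ℝ} {f' a b : ℝ}
    (hf : HasDerivWithinAt f f' (Iio b) b) (hab : a < b) (hle : ∀ x ∈ Ioo a b, f x ≤ f b) :
    0 ≤ f' := by
  have hslope : Tendsto (slope f b) (𝓝[<] b) (𝓝 f') := by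
    simpa using (hasDerivWithinAt_iff_tendsto_slope.mp hf)
  refine ge_of_tendsto hslope ?_
  filter_upwards [Ioo_mem_nhdsLT hab] with x hx
  rw [slope_def_field]
  exact div_nonneg_of_nonpos (sub_nonpos.mpr (hle x hx)) (sub_nonpos.mpr hx.2.le)

/-- Zeros of `f` on `[t, T]` can only be crossed downwards, so a zero at `T` forces `f > 0` at
`t`: otherwise `f ≤ 0` on all of `[t, T]`, and `T` would be a maximum with `f' T < 0`. -/
theorem pos_of_deriv_neg_at_zeros {f f' : ℝ → ℝ} {t T : ℝ} (htT : t < T)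
    (hf : ∀ x ∈ Icc t T, HasDerivAt f (f' x) x) (hzero : ∀ x ∈ Icc t T, f x = 0 → f' x < 0)
    (hfT : f T = 0) : 0 < f t := by
  by_contra! hft
  have hnonpos : ∀ x ∈ Icc t T, f x ≤ 0 :=
    image_le_of_deriv_right_lt_deriv_boundary' (B := fun _ ↦ 0) (B' := fun _ ↦ 0)
      (fun x hx ↦ (hf x hx).continuousAt.continuousWithinAt)
      (fun x hx ↦ (hf x (Ico_subset_Icc_self hx)).hasDerivWithinAt) hft continuousOn_const
      (fun _ _ ↦ hasDerivWithinAt_const _ _ _)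
      (fun x hx ↦ hzero x (Ico_subset_Icc_self hx))
  have hT : T ∈ Icc t T := right_mem_Icc.mpr htT.le
  have hderiv_nonneg : 0 ≤ f' T :=
    (hf T hT).hasDerivWithinAt.nonneg_of_forall_Ioo_le htT
      (fun x hx ↦ hfT ▸ hnonpos x (Ioo_subset_Icc_self hx))
  exact (hzero T hT hfT).not_ge hderiv_nonneg

theorem stmt_2_general (T : ℝ)
    (a : ℝ → ℝ)
    (ψ : ℝ → ℝ)
    (hψ : ∀ t ∈ Set.Icc (0:ℝ) T, HasDerivAt ψ (-1 + ψ t * a t) t)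
    (hψT : ψ T = 0) :
    ∀ t ∈ Set.Ico (0:ℝ) T, 0 < ψ t := by
  intro t ht
  exact pos_of_deriv_neg_at_zeros ht.2 (fun x hx ↦ hψ x ⟨ht.1.trans hx.1, hx.2⟩)
    (fun x _ hx ↦ by simp [hx]) hψT

/-- Positivity of the adjoint variable before the final time. -/
theorem stmt_2 (T : ℝ) (hT : 0 < T)
    (a : ℝ → ℝ) (ha : ContinuousOn a (Set.Icc 0 T))
    (ψ : ℝ → ℝ)
    (hψ : ∀ t ∈ Set.Icc (0:ℝ) T, HasDerivAt ψ (-1 + ψ t * a t) t)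
    (hψT : ψ T = 0) :
    ∀ t ∈ Set.Ico (0:ℝ) T, 0 < ψ t :=
  stmt_2_general T a ψ hψ hψT
end

section
/- There do not exist α > 0, δ > 0, t' ∈ ℝ, and differentiable functions x, ψ : [t', t'+δ] → ℝ such that: x(t) < 0 for all t ∈ [t', t'+δ]; ψ(t') = α; ψ'(t') = 0; ψ'(t) = −1 + ψ(t)·φ'(x(t)) for all t ∈ [t', t'+δ]; and EITHER (a) ψ(t) > α for all t ∈ (t', t'+δ) together with x'(t) = 1 − φ(x(t)) − g and x(t) < x_max on [t', t'+δ], OR (b) ψ(t) < α for all t ∈ (t', t'+δ) together with x'(t) = −φ(x(t)) − g and x(t) > x_min on [t', t'+δ]. (That is, the adjoint variable cannot leave the switching level ψ = α with zero derivative at a time where the velocity is negative.) -/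
/-!
At the switching time `ψ' = 0`, so differentiating the adjoint equation once more gives
`ψ''(t') = α φ''(x) ẋ`. On `x < 0` the friction is strictly concave, `φ'' < 0`, while below
`x_max` the accelerating velocity `1 - φ(x) - g` is positive and above `x_min` the braking
velocity `-φ(x) - g` is negative. Hence `ψ'' < 0` in case (a) and `ψ'' > 0` in case (b): in both
cases `ψ` leaves the level `α` on the wrong side.
-/

open Set Filter Topology

lemma eventually_neg_nhdsGT_of_hasDerivAt {f : ℝ → ℝ} {a d : ℝ} (hf : HasDerivAt f d a)
    (ha : f a = 0) (hd : d < 0) : ∀ᶠ t in 𝓝[>] a, f t < 0 := by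
  filter_upwards [nhdsWithin_le_nhds (eventually_nhdsWithin_sign_eq_of_deriv_neg
    (hf.deriv ▸ hd) ha), self_mem_nhdsWithin] with t hsign (ht : a < t)
  rwa [sign_neg (sub_neg.mpr ht), sign_eq_neg_one_iff] at hsign

lemma eventually_lt_nhdsGT_of_hasDerivAt_deriv_neg {f f' : ℝ → ℝ} {a d : ℝ}
    (hf : ∀ᶠ t in 𝓝[≥] a, HasDerivAt f (f' t) t) (ha : f' a = 0) (hf' : HasDerivAt f' d a)
    (hd : d < 0) : ∀ᶠ t in 𝓝[>] a, f t < f a := by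
  have hS : {t | HasDerivAt f (f' t) t ∧ (a < t → f' t < 0)} ∈ 𝓝[≥] a := by
    refine hf.and (nhdsWithin_le_nhds ?_)
    exact eventually_nhdsWithin_iff.mp (eventually_neg_nhdsGT_of_hasDerivAt hf' ha hd)
  obtain ⟨u, hau, hu⟩ := mem_nhdsGE_iff_exists_Ico_subset.mp hS
  have hanti : StrictAntiOn f (Ico a u) := by
    refine strictAntiOn_of_hasDerivWithinAt_neg (convex_Ico a u)
      (fun t ht ↦ (hu ht).1.continuousAt.continuousWithinAt) (f' := f') ?_ ?_
    · rw [interior_Ico]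
      exact fun t ht ↦ (hu (Ioo_subset_Ico_self ht)).1.hasDerivWithinAt
    · rw [interior_Ico]
      exact fun t ht ↦ (hu (Ioo_subset_Ico_self ht)).2 ht.1
  filter_upwards [Ioo_mem_nhdsGT hau] with t ht
  exact hanti (left_mem_Ico.mpr hau) (Ioo_subset_Ico_self ht) ht.1

lemma eventually_gt_nhdsGT_of_hasDerivAt_deriv_pos {f f' : ℝ → ℝ} {a d : ℝ}
    (hf : ∀ᶠ t in 𝓝[≥] a, HasDerivAt f (f' t) t) (ha : f' a = 0) (hf' : HasDerivAt f' d a)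
    (hd : 0 < d) : ∀ᶠ t in 𝓝[>] a, f a < f t := by
  simpa using eventually_lt_nhdsGT_of_hasDerivAt_deriv_neg (f := -f) (f' := -f')
    (hf.mono fun t ht ↦ ht.neg) (by simp [ha]) hf'.neg (neg_lt_zero.mpr hd)

lemma hasDerivAt_deriv_of_contDiffOn_two {f : ℝ → ℝ} {s : Set ℝ} {y : ℝ}
    (hf : ContDiffOn ℝ 2 f s) (hs : IsOpen s) (hy : y ∈ s) :
    HasDerivAt (deriv f) (deriv (deriv f) y) y :=
  (((hf.deriv_of_isOpen hs (m := 1) (by norm_num)).differentiableOn one_ne_zero).differentiableAt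
    (hs.mem_nhds hy)).hasDerivAt

/-- At a zero of `ψ' = -1 + ψ k(x)` the product rule loses its `ψ' k(x)` term. -/
lemma hasDerivAt_adjoint_rhs_of_eq_zero {ψ x k : ℝ → ℝ} {t v c : ℝ}
    (hψ : HasDerivAt ψ (-1 + ψ t * k (x t)) t) (hx : HasDerivAt x v t)
    (hk : HasDerivAt k c (x t)) (h0 : -1 + ψ t * k (x t) = 0) :
    HasDerivAt (fun s ↦ -1 + ψ s * k (x s)) (ψ t * (c * v)) t := by
  simpa [h0] using ((hψ.mul (hk.comp t hx)).const_add (-1))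

theorem stmt_5_general (φ : ℝ → ℝ) (g xmin xmax : ℝ)
    (hφ' : ∀ y : ℝ, 0 < deriv φ y)
    (hφC2 : ContDiffOn ℝ 2 φ {(0:ℝ)}ᶜ)
    (hφ''neg : ∀ y : ℝ, y < 0 → deriv (deriv φ) y < 0)
    (hmin : φ xmin = -g) (hmax : φ xmax = 1 - g) :
    ¬ ∃ (α δ t' : ℝ) (x ψ : ℝ → ℝ),
      0 < α ∧ 0 < δ ∧
      (∀ t ∈ Set.Icc t' (t' + δ), x t < 0) ∧
      ψ t' = α ∧
      deriv ψ t' = 0 ∧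
      (∀ t ∈ Set.Icc t' (t' + δ), HasDerivAt ψ (-1 + ψ t * deriv φ (x t)) t) ∧
      (((∀ t ∈ Set.Ioo t' (t' + δ), α < ψ t) ∧
          (∀ t ∈ Set.Icc t' (t' + δ), HasDerivAt x (1 - φ (x t) - g) t) ∧
          (∀ t ∈ Set.Icc t' (t' + δ), x t < xmax)) ∨
        ((∀ t ∈ Set.Ioo t' (t' + δ), ψ t < α) ∧
          (∀ t ∈ Set.Icc t' (t' + δ), HasDerivAt x (-(φ (x t)) - g) t) ∧
          (∀ t ∈ Set.Icc t' (t' + δ), xmin < x t))) := by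
  rintro ⟨α, δ, t', x, ψ, hα, hδ, hxneg, rfl, hdψ, hψ, hcase⟩
  have ht' : t' ∈ Icc t' (t' + δ) := left_mem_Icc.mpr (by linarith)
  have hψ_ev : ∀ᶠ t in 𝓝[≥] t', HasDerivAt ψ (-1 + ψ t * deriv φ (x t)) t :=
    mem_of_superset (Icc_mem_nhdsGE (by linarith)) hψ
  have hIoo : Ioo t' (t' + δ) ∈ 𝓝[>] t' := Ioo_mem_nhdsGT (by linarith)
  have hrhs : -1 + ψ t' * deriv φ (x t') = 0 := hdψ ▸ (hψ t' ht').deriv.symm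
  have hφ'' := hasDerivAt_deriv_of_contDiffOn_two hφC2 isOpen_compl_singleton
    (hxneg t' ht').ne
  have hconcave := hφ''neg _ (hxneg t' ht')
  have hφmono := strictMono_of_deriv_pos hφ'
  rcases hcase with ⟨habove, hx, hxmax⟩ | ⟨hbelow, hx, hxmin⟩
  · have hvel : 0 < 1 - φ (x t') - g := by linarith [hφmono (hxmax t' ht')]
    have hdrop := eventually_lt_nhdsGT_of_hasDerivAt_deriv_neg hψ_ev hrhs
      (hasDerivAt_adjoint_rhs_of_eq_zero (hψ t' ht') (hx t' ht') hφ'' hrhs)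
      (mul_neg_of_pos_of_neg hα (mul_neg_of_neg_of_pos hconcave hvel))
    obtain ⟨t, hlt, hgt⟩ := (hdrop.and (mem_of_superset hIoo habove)).exists
    exact lt_asymm hlt hgt
  · have hvel : -φ (x t') - g < 0 := by linarith [hφmono (hxmin t' ht')]
    have hrise := eventually_gt_nhdsGT_of_hasDerivAt_deriv_pos hψ_ev hrhs
      (hasDerivAt_adjoint_rhs_of_eq_zero (hψ t' ht') (hx t' ht') hφ'' hrhs)
      (mul_pos hα (mul_pos_of_neg_of_neg hconcave hvel))
    obtain ⟨t, hgt, hlt⟩ := (hrise.and (mem_of_superset hIoo hbelow)).exists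
    exact lt_asymm hlt hgt

/-- The adjoint variable cannot leave the switching level ψ = α with
    zero derivative at a time where the velocity is negative. -/
theorem stmt_5 (φ : ℝ → ℝ) (g xmin xmax : ℝ)
    (hφ0 : φ 0 = 0)
    (hφdiff : Differentiable ℝ φ)
    (hφ' : ∀ y : ℝ, 0 < deriv φ y)
    (hφC2 : ContDiffOn ℝ 2 φ {(0:ℝ)}ᶜ)
    (hφ''neg : ∀ y : ℝ, y < 0 → deriv (deriv φ) y < 0)
    (hφ''pos : ∀ y : ℝ, 0 < y → 0 < deriv (deriv φ) y)
    (hg0 : 0 < g) (hg1 : g < 1)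
    (hxminneg : xmin < 0) (hxmaxpos : 0 < xmax)
    (hmin : φ xmin = -g) (hmax : φ xmax = 1 - g) :
    ¬ ∃ (α δ t' : ℝ) (x ψ : ℝ → ℝ),
      0 < α ∧ 0 < δ ∧
      (∀ t ∈ Set.Icc t' (t' + δ), x t < 0) ∧
      ψ t' = α ∧
      deriv ψ t' = 0 ∧
      (∀ t ∈ Set.Icc t' (t' + δ), HasDerivAt ψ (-1 + ψ t * deriv φ (x t)) t) ∧
      (((∀ t ∈ Set.Ioo t' (t' + δ), α < ψ t) ∧
          (∀ t ∈ Set.Icc t' (t' + δ), HasDerivAt x (1 - φ (x t) - g) t) ∧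
          (∀ t ∈ Set.Icc t' (t' + δ), x t < xmax)) ∨
        ((∀ t ∈ Set.Ioo t' (t' + δ), ψ t < α) ∧
          (∀ t ∈ Set.Icc t' (t' + δ), HasDerivAt x (-(φ (x t)) - g) t) ∧
          (∀ t ∈ Set.Icc t' (t' + δ), xmin < x t))) :=
  stmt_5_general φ g xmin xmax hφ' hφC2 hφ''neg hmin hmax
end

section
/- There do not exist α > 0, δ > 0, t'' ∈ ℝ, and differentiable functions x, ψ : [t''−δ, t''] → ℝ such that: x(t) < 0 for all t ∈ [t''−δ, t'']; ψ(t'') = α; ψ'(t'') = 0; ψ'(t) = −1 + ψ(t)·φ'(x(t)) for all t ∈ [t''−δ, t'']; and EITHER (a) ψ(t) > α for all t ∈ (t''−δ, t'') together with x'(t) = 1 − φ(x(t)) − g and x(t) < x_max on [t''−δ, t''], OR (b) ψ(t) < α for all t ∈ (t''−δ, t'') together with x'(t) = −φ(x(t)) − g and x(t) > x_min on [t''−δ, t'']. (That is, the adjoint variable cannot reach the switching level ψ = α with zero derivative at a time where the velocity is negative.) -/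
/-!
At the switching time `T` the conditions `ψ T = α` and `ψ' T = 0` give `α φ'(x T) = 1`, so
`ψ' = ψ φ'(x) - α φ'(x T)`. Before `T` the state moves monotonically to `x T < 0`, where `φ'` is
strictly decreasing; hence `φ'(x t) - φ'(x T)` has the same sign as `ψ t - α`, and so does `ψ'`.
Then `ψ` approaches `α` from the wrong side: in case (a) it increases to `α` although `ψ > α`,
in case (b) it decreases to `α` although `ψ < α`.
-/

open Set

theorem strictAntiOn_of_deriv_neg_of_isOpen {f : ℝ → ℝ} {s : Set ℝ} (hs : Convex ℝ s)
    (hso : IsOpen s) (hf' : ∀ y ∈ s, deriv f y < 0) : StrictAntiOn f s :=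
  strictAntiOn_of_deriv_neg hs
    (fun y hy => (differentiableAt_of_deriv_ne_zero (hf' y hy).ne).continuousAt.continuousWithinAt)
    (by rwa [hso.interior_eq])

section Icc

variable {f f' : ℝ → ℝ} {a b : ℝ}

theorem continuousOn_Icc_of_hasDerivAt (hf : ∀ t ∈ Icc a b, HasDerivAt f (f' t) t) :
    ContinuousOn f (Icc a b) :=
  fun t ht => (hf t ht).continuousAt.continuousWithinAt

theorem strictMonoOn_Icc_of_hasDerivAt_pos (hf : ∀ t ∈ Icc a b, HasDerivAt f (f' t) t)
    (hf' : ∀ t ∈ Ioo a b, 0 < f' t) : StrictMonoOn f (Icc a b) :=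
  strictMonoOn_of_deriv_pos (convex_Icc a b) (continuousOn_Icc_of_hasDerivAt hf) fun t ht => by
    rw [interior_Icc] at ht
    rw [(hf t (Ioo_subset_Icc_self ht)).deriv]
    exact hf' t ht

theorem strictAntiOn_Icc_of_hasDerivAt_neg (hf : ∀ t ∈ Icc a b, HasDerivAt f (f' t) t)
    (hf' : ∀ t ∈ Ioo a b, f' t < 0) : StrictAntiOn f (Icc a b) :=
  strictAntiOn_of_deriv_neg (convex_Icc a b) (continuousOn_Icc_of_hasDerivAt hf) fun t ht => by
    rw [interior_Icc] at ht
    rw [(hf t (Ioo_subset_Icc_self ht)).deriv]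
    exact hf' t ht

end Icc

section Adjoint

variable {ψ k : ℝ → ℝ} {a b α : ℝ}

theorem not_forall_lt_adjoint_of_lt_coeff (hab : a < b) (hα : 0 < α)
    (hψ : ∀ t ∈ Icc a b, HasDerivAt ψ (-1 + ψ t * k t) t) (hψb : ψ b = α)
    (hswitch : α * k b = 1) (hk : ∀ t ∈ Ioo a b, k b < k t) :
    ¬ ∀ t ∈ Ioo a b, α < ψ t := by
  intro hψgt
  have hkb : 0 < k b := pos_of_mul_pos_right (hswitch ▸ one_pos) hα.le
  have hmono : StrictMonoOn ψ (Icc a b) := strictMonoOn_Icc_of_hasDerivAt_pos hψ fun t ht => by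
    nlinarith [hψgt t ht, hk t ht]
  have hmid : (a + b) / 2 ∈ Ioo a b := ⟨by linarith, by linarith⟩
  have := hmono (Ioo_subset_Icc_self hmid) (right_mem_Icc.2 hab.le) hmid.2
  linarith [hψgt _ hmid]

theorem not_forall_adjoint_lt_of_coeff_lt (hab : a < b) (hα : 0 < α)
    (hψ : ∀ t ∈ Icc a b, HasDerivAt ψ (-1 + ψ t * k t) t) (hψb : ψ b = α)
    (hswitch : α * k b = 1) (hkpos : ∀ t ∈ Ioo a b, 0 < k t) (hk : ∀ t ∈ Ioo a b, k t < k b) :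
    ¬ ∀ t ∈ Ioo a b, ψ t < α := by
  intro hψlt
  have hanti : StrictAntiOn ψ (Icc a b) := strictAntiOn_Icc_of_hasDerivAt_neg hψ fun t ht => by
    nlinarith [hψlt t ht, hk t ht, hkpos t ht]
  have hmid : (a + b) / 2 ∈ Ioo a b := ⟨by linarith, by linarith⟩
  have := hanti (Ioo_subset_Icc_self hmid) (right_mem_Icc.2 hab.le) hmid.2
  linarith [hψlt _ hmid]

end Adjoint

theorem stmt_6_general (φ : ℝ → ℝ) (g xmin xmax : ℝ)
    (hφ' : ∀ y : ℝ, 0 < deriv φ y)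
    (hφ''neg : ∀ y : ℝ, y < 0 → deriv (deriv φ) y < 0)
    (hmin : φ xmin = -g) (hmax : φ xmax = 1 - g) :
    ¬ ∃ (α δ t'' : ℝ) (x ψ : ℝ → ℝ),
      0 < α ∧ 0 < δ ∧
      (∀ t ∈ Set.Icc (t'' - δ) t'', x t < 0) ∧
      ψ t'' = α ∧
      deriv ψ t'' = 0 ∧
      (∀ t ∈ Set.Icc (t'' - δ) t'', HasDerivAt ψ (-1 + ψ t * deriv φ (x t)) t) ∧
      (((∀ t ∈ Set.Ioo (t'' - δ) t'', α < ψ t) ∧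
          (∀ t ∈ Set.Icc (t'' - δ) t'', HasDerivAt x (1 - φ (x t) - g) t) ∧
          (∀ t ∈ Set.Icc (t'' - δ) t'', x t < xmax)) ∨
        ((∀ t ∈ Set.Ioo (t'' - δ) t'', ψ t < α) ∧
          (∀ t ∈ Set.Icc (t'' - δ) t'', HasDerivAt x (-(φ (x t)) - g) t) ∧
          (∀ t ∈ Set.Icc (t'' - δ) t'', xmin < x t))) := by
  rintro ⟨α, δ, T, x, ψ, hα, hδ, hxneg, hψT, hψ'T, hψ, hcase⟩
  have hab : T - δ < T := by linarith
  have hT : T ∈ Icc (T - δ) T := right_mem_Icc.2 hab.le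
  have hφ : StrictMono φ := strictMono_of_deriv_pos hφ'
  have hφ'anti : StrictAntiOn (deriv φ) (Iio 0) :=
    strictAntiOn_of_deriv_neg_of_isOpen (convex_Iio 0) isOpen_Iio hφ''neg
  have hswitch : α * deriv φ (x T) = 1 := by
    have := (hψ T hT).deriv
    rw [hψ'T, hψT] at this
    linarith
  rcases hcase with ⟨hψgt, hx, hxlt⟩ | ⟨hψlt, hx, hxgt⟩
  · have hxmono := strictMonoOn_Icc_of_hasDerivAt_pos hx fun t ht => by
      linarith [hmax ▸ hφ (hxlt t (Ioo_subset_Icc_self ht))]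
    exact not_forall_lt_adjoint_of_lt_coeff hab hα hψ hψT hswitch (fun t ht =>
      hφ'anti (hxneg t (Ioo_subset_Icc_self ht)) (hxneg T hT)
        (hxmono (Ioo_subset_Icc_self ht) hT ht.2)) hψgt
  · have hxanti := strictAntiOn_Icc_of_hasDerivAt_neg hx fun t ht => by
      linarith [hmin ▸ hφ (hxgt t (Ioo_subset_Icc_self ht))]
    exact not_forall_adjoint_lt_of_coeff_lt hab hα hψ hψT hswitch (fun t _ => hφ' _)
      (fun t ht => hφ'anti (hxneg T hT) (hxneg t (Ioo_subset_Icc_self ht))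
        (hxanti (Ioo_subset_Icc_self ht) hT ht.2)) hψlt

/-- The adjoint variable cannot reach the switching level ψ = α with
    zero derivative at a time where the velocity is negative. -/
theorem stmt_6 (φ : ℝ → ℝ) (g xmin xmax : ℝ)
    (hφ0 : φ 0 = 0)
    (hφdiff : Differentiable ℝ φ)
    (hφ' : ∀ y : ℝ, 0 < deriv φ y)
    (hφC2 : ContDiffOn ℝ 2 φ {(0:ℝ)}ᶜ)
    (hφ''neg : ∀ y : ℝ, y < 0 → deriv (deriv φ) y < 0)
    (hφ''pos : ∀ y : ℝ, 0 < y → 0 < deriv (deriv φ) y)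
    (hg0 : 0 < g) (hg1 : g < 1)
    (hxminneg : xmin < 0) (hxmaxpos : 0 < xmax)
    (hmin : φ xmin = -g) (hmax : φ xmax = 1 - g) :
    ¬ ∃ (α δ t'' : ℝ) (x ψ : ℝ → ℝ),
      0 < α ∧ 0 < δ ∧
      (∀ t ∈ Set.Icc (t'' - δ) t'', x t < 0) ∧
      ψ t'' = α ∧
      deriv ψ t'' = 0 ∧
      (∀ t ∈ Set.Icc (t'' - δ) t'', HasDerivAt ψ (-1 + ψ t * deriv φ (x t)) t) ∧
      (((∀ t ∈ Set.Ioo (t'' - δ) t'', α < ψ t) ∧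
          (∀ t ∈ Set.Icc (t'' - δ) t'', HasDerivAt x (1 - φ (x t) - g) t) ∧
          (∀ t ∈ Set.Icc (t'' - δ) t'', x t < xmax)) ∨
        ((∀ t ∈ Set.Ioo (t'' - δ) t'', ψ t < α) ∧
          (∀ t ∈ Set.Icc (t'' - δ) t'', HasDerivAt x (-(φ (x t)) - g) t) ∧
          (∀ t ∈ Set.Icc (t'' - δ) t'', xmin < x t))) :=
  stmt_6_general φ g xmin xmax hφ' hφ''neg hmin hmax
end

section
/- Let T > 0, α > 0, and let x, ψ : [0,T] → ℝ be differentiable with: ψ'(t) = −1 + ψ(t)·φ'(x(t)) for all t; x(t) ∈ (x_min, x_max) for all t; x'(t) = 1 − φ(x(t)) − g at every t with ψ(t) > α, and x'(t) = −φ(x(t)) − g at every t with ψ(t) < α. Let M = {t ∈ [0,T] : ψ(t) = α} and suppose there exists x₁ ∈ ℝ with x(t) = x₁ for all t ∈ M. Then M is order-connected: whenever t', t'' ∈ M and t' ≤ s ≤ t'', one has s ∈ M. (Hence M is empty, a single point, or a segment.) -/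
/-!
Suppose ψ(s) ≠ α for some s between two switching times. Then s lies on a bang arc (a, b):
ψ(a) = ψ(b) = α, ψ − α has a constant sign on (a, b) and the control is a constant w ∈ {0, 1},
so x is strictly monotone there and the Hamiltonian H = ψ (w − φ(x) − g) + x is constant, say C.
Since x(a) = x(b), the adjoint equation gives ψ'(a) = ψ'(b), and the sign of ψ − α forces both to
vanish. As x need not be continuous at switching times, pass to the limits p < q of x at the ends
of the arc: there H = C says that h(ξ) = ξ − αφ(ξ) takes the same value at p and q, while
(ψ − α)(w − φ(x) − g) > 0 puts h strictly below that value on (p, q). For p ≥ 0 this contradicts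
the strict concavity of h on [p, q]. For p < 0, the derivative-limit theorem turns ψ' = 0 at the
endpoint into αφ'(p) = 1, i.e. h'(p) = 0, which contradicts the strict convexity of h near p.
-/

open Set Filter Topology

section Calculus

variable {f f' : ℝ → ℝ} {a b d ℓ : ℝ}

theorem HasDerivAt.eq_zero_of_pos_Ioo (hab : a < b) (ha : HasDerivAt f d a)
    (hb : HasDerivAt f d b) (hfa : f a = 0) (hfb : f b = 0) (hpos : ∀ t ∈ Ioo a b, 0 < f t) :
    d = 0 := by
  have hnonpos : d ≤ 0 := by
    refine le_of_tendsto (hasDerivAt_iff_tendsto_slope.1 hb |>.mono_left (nhdsLT_le_nhdsNE b)) ?_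
    filter_upwards [Ioo_mem_nhdsLT hab] with t ht
    rw [slope_def_field, hfb, sub_zero]
    exact (div_neg_of_pos_of_neg (hpos t ht) (sub_neg.2 ht.2)).le
  have hnonneg : 0 ≤ d := by
    refine ge_of_tendsto (hasDerivAt_iff_tendsto_slope.1 ha |>.mono_left (nhdsGT_le_nhdsNE a)) ?_
    filter_upwards [Ioo_mem_nhdsGT hab] with t ht
    rw [slope_def_field, hfa, sub_zero]
    exact (div_pos (hpos t ht) (sub_pos.2 ht.1)).le
  exact le_antisymm hnonpos hnonneg

theorem HasDerivAt.eq_of_tendsto_deriv {l : Filter ℝ} (hl : l = 𝓝[>] a ∨ l = 𝓝[<] a)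
    (hd : HasDerivAt f d a) (hf : ∀ᶠ t in l, HasDerivAt f (f' t) t)
    (hlim : Tendsto f' l (𝓝 ℓ)) : d = ℓ := by
  have hderiv : Tendsto (_root_.deriv f) l (𝓝 ℓ) := hlim.congr' (hf.mono fun t ht => ht.deriv.symm)
  have hdiff : DifferentiableOn ℝ f {t | HasDerivAt f (f' t) t} :=
    fun t ht => ht.differentiableAt.differentiableWithinAt
  rcases hl with rfl | rfl
  · exact (uniqueDiffWithinAt_Ici a).eq_deriv _ hd.hasDerivWithinAt
      (hasDerivWithinAt_Ici_of_tendsto_deriv hdiff hd.continuousAt.continuousWithinAt hf hderiv)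
  · exact (uniqueDiffWithinAt_Iic a).eq_deriv _ hd.hasDerivWithinAt
      (hasDerivWithinAt_Iic_of_tendsto_deriv hdiff hd.continuousAt.continuousWithinAt hf hderiv)

end Calculus

section Zeros

variable {f : ℝ → ℝ} {a b s : ℝ}

theorem exists_zero_forall_pos_Ioc (hs : a ≤ s) (hf : ContinuousOn f (Icc a s)) (ha : f a ≤ 0)
    (hfs : 0 < f s) : ∃ c ∈ Ico a s, f c = 0 ∧ ∀ t ∈ Ioc c s, 0 < f t := by
  have hS : IsClosed (Icc a s ∩ f ⁻¹' Iic 0) :=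
    hf.preimage_isClosed_of_isClosed isClosed_Icc isClosed_Iic
  have hbdd : BddAbove (Icc a s ∩ f ⁻¹' Iic 0) := ⟨s, fun t ht => ht.1.2⟩
  obtain ⟨⟨hac, hcs⟩, hfc⟩ := hS.csSup_mem ⟨a, left_mem_Icc.2 hs, ha⟩ hbdd
  set c := sSup (Icc a s ∩ f ⁻¹' Iic 0)
  have hpos : ∀ t ∈ Ioc c s, 0 < f t := fun t ht => by
    by_contra h
    exact ht.1.not_ge (le_csSup hbdd ⟨⟨hac.trans ht.1.le, ht.2⟩, not_lt.1 h⟩)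
  have hcs : c < s := hcs.lt_of_ne fun h => (h ▸ hfc : f s ≤ 0).not_gt hfs
  refine ⟨c, ⟨hac, hcs⟩, le_antisymm hfc (not_lt.1 fun hneg => ?_), hpos⟩
  obtain ⟨t, ht, hft⟩ := intermediate_value_Ioo hcs.le (hf.mono (Icc_subset_Icc_left hac))
    ⟨hneg, hfs⟩
  exact (hpos t ⟨ht.1, ht.2.le⟩).ne' hft

theorem exists_zero_forall_pos_Ico (hs : s ≤ b) (hf : ContinuousOn f (Icc s b)) (hb : f b ≤ 0)
    (hfs : 0 < f s) : ∃ d ∈ Ioc s b, f d = 0 ∧ ∀ t ∈ Ico s d, 0 < f t := by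
  obtain ⟨c, ⟨hbc, hcs⟩, hfc, hpos⟩ := exists_zero_forall_pos_Ioc (f := f ∘ Neg.neg)
    (neg_le_neg hs) (hf.comp continuousOn_neg fun t ht => ⟨le_neg.1 ht.2, neg_le.1 ht.1⟩)
    (by simpa using hb) (by simpa using hfs)
  refine ⟨-c, ⟨lt_neg.1 hcs, neg_le.1 hbc⟩, hfc, fun t ht => ?_⟩
  simpa using hpos (-t) ⟨lt_neg.1 ht.2, neg_le_neg ht.1⟩

theorem exists_Ioo_forall_pos (hf : ContinuousOn f (Icc a b)) (ha : f a ≤ 0) (hb : f b ≤ 0)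
    (hs : s ∈ Icc a b) (hfs : 0 < f s) :
    ∃ c d, a ≤ c ∧ c < d ∧ d ≤ b ∧ f c = 0 ∧ f d = 0 ∧ ∀ t ∈ Ioo c d, 0 < f t := by
  obtain ⟨c, ⟨hac, hcs⟩, hfc, hposc⟩ :=
    exists_zero_forall_pos_Ioc hs.1 (hf.mono (Icc_subset_Icc_right hs.2)) ha hfs
  obtain ⟨d, ⟨hsd, hdb⟩, hfd, hposd⟩ :=
    exists_zero_forall_pos_Ico hs.2 (hf.mono (Icc_subset_Icc_left hs.1)) hb hfs
  refine ⟨c, d, hac, hcs.trans hsd, hdb, hfc, hfd, fun t ht => ?_⟩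
  rcases le_total t s with hts | hst
  exacts [hposc t ⟨ht.1, hts⟩, hposd t ⟨hst, ht.2⟩]

end Zeros

theorem exists_mem_Ioo_lt_sub_mul {φ : ℝ → ℝ} {α p q : ℝ} (hconc : StrictConcaveOn ℝ (Iic 0) φ)
    (hconv : StrictConvexOn ℝ (Ici 0) φ) (hα : 0 < α) (hpq : p < q)
    (heq : p - α * φ p = q - α * φ q) (htan : p < 0 → HasDerivAt φ α⁻¹ p) :
    ∃ ξ ∈ Ioo p q, p - α * φ p < ξ - α * φ ξ := by
  rcases lt_or_ge p 0 with hp | hp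
  · -- on the concave side φ lies below its tangent line, whose slope is α⁻¹
    obtain ⟨ξ, hpξ, hξ⟩ := exists_between (lt_min hpq hp)
    have hslope := hconc.slope_lt_of_hasDerivAt hp.le (hξ.trans_le (min_le_right _ _)).le hpξ
      (htan hp)
    rw [slope_def_field, div_lt_iff₀ (sub_pos.2 hpξ)] at hslope
    refine ⟨ξ, ⟨hpξ, hξ.trans_le (min_le_left _ _)⟩, ?_⟩
    have := mul_lt_mul_of_pos_left hslope hα
    rw [← mul_assoc, mul_inv_cancel₀ hα.ne', one_mul] at this
    linarith
  · have hmid := hconv.2 hp (hp.trans hpq.le : (0 : ℝ) ≤ q) hpq.ne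
      (by norm_num : (0 : ℝ) < 1 / 2) (by norm_num : (0 : ℝ) < 1 / 2) (by norm_num)
    simp only [smul_eq_mul] at hmid
    refine ⟨1 / 2 * p + 1 / 2 * q, ⟨by linarith, by linarith⟩, ?_⟩
    nlinarith [mul_lt_mul_of_pos_left hmid hα]

/-- Pontryagin's Hamiltonian: `-∂H/∂x = -1 + ψ φ'(x)` is the adjoint equation. -/
def hamiltonian (φ : ℝ → ℝ) (g x ψ u : ℝ) : ℝ := ψ * (u - φ x - g) + x

section Hamiltonian

variable {φ : ℝ → ℝ} {g w α C L : ℝ} {x ψ : ℝ → ℝ}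

theorem hasDerivAt_hamiltonian {t : ℝ} (hφ : DifferentiableAt ℝ φ (x t))
    (hψ : HasDerivAt ψ (-1 + ψ t * deriv φ (x t)) t) (hx : HasDerivAt x (w - φ (x t) - g) t) :
    HasDerivAt (fun s => hamiltonian φ g (x s) (ψ s) w) 0 t := by
  have hv : HasDerivAt (fun s => w - φ (x s) - g) (-(deriv φ (x t) * (w - φ (x t) - g))) t := by
    simpa using ((hφ.hasDerivAt.comp t hx).const_sub w).sub_const g
  exact ((hψ.mul hv).add hx).congr_deriv (by ring)

theorem hamiltonian_eq_of_tendsto {l : Filter ℝ} [l.NeBot] (hφ : Continuous φ)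
    (hψ : Tendsto ψ l (𝓝 α)) (hx : Tendsto x l (𝓝 L))
    (hH : ∀ᶠ t in l, hamiltonian φ g (x t) (ψ t) w = C) : hamiltonian φ g L α w = C :=
  tendsto_nhds_unique
    ((hψ.mul ((tendsto_const_nhds.sub ((hφ.tendsto L).comp hx)).sub tendsto_const_nhds)).add hx)
    (tendsto_const_nhds.congr' (hH.mono fun _ h => h.symm))

theorem mul_deriv_eq_one_of_tendsto {l : Filter ℝ} {e : ℝ} (hl : l = 𝓝[>] e ∨ l = 𝓝[<] e)
    (hd : HasDerivAt ψ 0 e) (hψ : ∀ᶠ t in l, HasDerivAt ψ (-1 + ψ t * deriv φ (x t)) t)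
    (hψlim : Tendsto ψ l (𝓝 α)) (hx : Tendsto x l (𝓝 L)) (hφ' : ContinuousAt (deriv φ) L) :
    α * deriv φ L = 1 := by
  have := hd.eq_of_tendsto_deriv hl hψ
    (tendsto_const_nhds.add (hψlim.mul ((hφ'.tendsto).comp hx)))
  linarith

end Hamiltonian

theorem strictMonoOn_or_strictAntiOn_of_hasDerivAt {x v : ℝ → ℝ} {a b ε : ℝ} (hε : ε ≠ 0)
    (hx : ∀ t ∈ Ioo a b, HasDerivAt x (v t) t) (hv : ∀ t ∈ Ioo a b, 0 < ε * v t) :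
    StrictMonoOn x (Ioo a b) ∨ StrictAntiOn x (Ioo a b) := by
  have hxcont : ContinuousOn x (Ioo a b) := fun t ht => (hx t ht).continuousAt.continuousWithinAt
  rcases hε.lt_or_gt with hε | hε
  · refine Or.inr (strictAntiOn_of_deriv_neg (convex_Ioo a b) hxcont fun t ht => ?_)
    rw [interior_Ioo] at ht
    rw [(hx t ht).deriv]
    exact neg_of_mul_pos_right (hv t ht) hε.le
  · refine Or.inl (strictMonoOn_of_deriv_pos (convex_Ioo a b) hxcont fun t ht => ?_)
    rw [interior_Ioo] at ht
    rw [(hx t ht).deriv]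
    exact pos_of_mul_pos_right (hv t ht) hε.le

theorem exists_tendsto_csInf_csSup {x : ℝ → ℝ} {a b : ℝ} (hab : a < b)
    (hx : StrictMonoOn x (Ioo a b) ∨ StrictAntiOn x (Ioo a b))
    (hbdd : Bornology.IsBounded (x '' Ioo a b)) :
    ∃ lp lq : Filter ℝ, (lp = 𝓝[>] a ∧ lq = 𝓝[<] b ∨ lp = 𝓝[<] b ∧ lq = 𝓝[>] a) ∧
      Tendsto x lp (𝓝 (sInf (x '' Ioo a b))) ∧ Tendsto x lq (𝓝 (sSup (x '' Ioo a b))) ∧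
      sInf (x '' Ioo a b) < sSup (x '' Ioo a b) := by
  obtain ⟨t₁, hat₁, ht₁b⟩ := exists_between hab
  obtain ⟨t₂, ht₁₂, ht₂b⟩ := exists_between ht₁b
  have ht₁ : t₁ ∈ Ioo a b := ⟨hat₁, ht₁b⟩
  have ht₂ : t₂ ∈ Ioo a b := ⟨hat₁.trans ht₁₂, ht₂b⟩
  have hinf := csInf_le hbdd.bddBelow (mem_image_of_mem x ht₁)
  have hinf' := csInf_le hbdd.bddBelow (mem_image_of_mem x ht₂)
  have hsup := le_csSup hbdd.bddAbove (mem_image_of_mem x ht₁)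
  have hsup' := le_csSup hbdd.bddAbove (mem_image_of_mem x ht₂)
  rcases hx with hx | hx
  · exact ⟨_, _, Or.inl ⟨rfl, rfl⟩,
      hx.monotoneOn.tendsto_nhdsWithin_Ioo_right ⟨t₁, ht₁⟩ hbdd.bddBelow,
      hx.monotoneOn.tendsto_nhdsWithin_Ioo_left ⟨t₁, ht₁⟩ hbdd.bddAbove,
      by linarith [hx ht₁ ht₂ ht₁₂]⟩
  · exact ⟨_, _, Or.inr ⟨rfl, rfl⟩,
      hx.antitoneOn.tendsto_nhdsWithin_Ioo_left ⟨t₁, ht₁⟩ hbdd.bddBelow,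
      hx.antitoneOn.tendsto_nhdsWithin_Ioo_right ⟨t₁, ht₁⟩ hbdd.bddAbove,
      by linarith [hx ht₁ ht₂ ht₁₂]⟩

structure IsBangArc (φ : ℝ → ℝ) (g α w : ℝ) (x ψ : ℝ → ℝ) (a b : ℝ) : Prop where
  lt : a < b
  hasDerivAt_adjoint : ∀ t ∈ Icc a b, HasDerivAt ψ (-1 + ψ t * deriv φ (x t)) t
  adjoint_left : ψ a = α
  adjoint_right : ψ b = α
  hasDerivAt_state : ∀ t ∈ Ioo a b, HasDerivAt x (w - φ (x t) - g) t

namespace IsBangArc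

variable {φ : ℝ → ℝ} {g α w ε : ℝ} {x ψ : ℝ → ℝ} {a b : ℝ}

theorem hasDerivAt_adjoint_Ioo (h : IsBangArc φ g α w x ψ a b) :
    ∀ t ∈ Ioo a b, HasDerivAt ψ (-1 + ψ t * deriv φ (x t)) t :=
  fun t ht => h.hasDerivAt_adjoint t (Ioo_subset_Icc_self ht)

theorem exists_hamiltonian_eq_const (h : IsBangArc φ g α w x ψ a b) (hφ : Differentiable ℝ φ) :
    ∃ C, ∀ t ∈ Ioo a b, hamiltonian φ g (x t) (ψ t) w = C :=
  isOpen_Ioo.exists_is_const_of_deriv_eq_zero isPreconnected_Ioo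
    (fun t ht => (hasDerivAt_hamiltonian (hφ _) (h.hasDerivAt_adjoint_Ioo t ht)
      (h.hasDerivAt_state t ht)).differentiableAt.differentiableWithinAt)
    (fun t ht => (hasDerivAt_hamiltonian (hφ _) (h.hasDerivAt_adjoint_Ioo t ht)
      (h.hasDerivAt_state t ht)).deriv)

theorem hasDerivAt_adjoint_zero (h : IsBangArc φ g α w x ψ a b) (hε : ε ≠ 0)
    (hsign : ∀ t ∈ Ioo a b, 0 < ε * (ψ t - α)) (hxab : x a = x b) :
    HasDerivAt ψ 0 a ∧ HasDerivAt ψ 0 b := by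
  have ha := h.hasDerivAt_adjoint a (left_mem_Icc.2 h.lt.le)
  have hb := h.hasDerivAt_adjoint b (right_mem_Icc.2 h.lt.le)
  rw [h.adjoint_left] at ha
  rw [h.adjoint_right, ← hxab] at hb
  have h0 := ((ha.sub_const α).const_mul ε).eq_zero_of_pos_Ioo h.lt
    ((hb.sub_const α).const_mul ε) (by simp [h.adjoint_left]) (by simp [h.adjoint_right]) hsign
  rw [(mul_eq_zero.1 h0).resolve_left hε] at ha hb
  exact ⟨ha, hb⟩

theorem endpoint_limit (h : IsBangArc φ g α w x ψ a b) (hφ : Differentiable ℝ φ)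
    (hφ' : ∀ y < 0, ContinuousAt (deriv φ) y) (hd : HasDerivAt ψ 0 a ∧ HasDerivAt ψ 0 b)
    {C : ℝ} (hC : ∀ t ∈ Ioo a b, hamiltonian φ g (x t) (ψ t) w = C) {l : Filter ℝ}
    (hl : l = 𝓝[>] a ∨ l = 𝓝[<] b) {L : ℝ} (hL : Tendsto x l (𝓝 L)) :
    hamiltonian φ g L α w = C ∧ (L < 0 → α * deriv φ L = 1) := by
  obtain ⟨e, hle, hde, hψl, hmem⟩ : ∃ e, (l = 𝓝[>] e ∨ l = 𝓝[<] e) ∧ HasDerivAt ψ 0 e ∧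
      Tendsto ψ l (𝓝 α) ∧ Ioo a b ∈ l := by
    rcases hl with rfl | rfl
    · exact ⟨a, Or.inl rfl, hd.1,
        h.adjoint_left ▸ hd.1.continuousAt.tendsto.mono_left nhdsWithin_le_nhds,
        Ioo_mem_nhdsGT h.lt⟩
    · exact ⟨b, Or.inr rfl, hd.2,
        h.adjoint_right ▸ hd.2.continuousAt.tendsto.mono_left nhdsWithin_le_nhds,
        Ioo_mem_nhdsLT h.lt⟩
  have : l.NeBot := by rcases hle with rfl | rfl <;> infer_instance
  exact ⟨hamiltonian_eq_of_tendsto hφ.continuous hψl hL (eventually_of_mem hmem hC),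
    fun hL0 => mul_deriv_eq_one_of_tendsto hle hde
      (eventually_of_mem hmem h.hasDerivAt_adjoint_Ioo) hψl hL (hφ' L hL0)⟩

theorem state_ne (h : IsBangArc φ g α w x ψ a b) (hφ : Differentiable ℝ φ)
    (hconc : StrictConcaveOn ℝ (Iic 0) φ) (hconv : StrictConvexOn ℝ (Ici 0) φ)
    (hφ' : ∀ y < 0, ContinuousAt (deriv φ) y) (hα : 0 < α) (hε : ε ≠ 0)
    (hxbdd : Bornology.IsBounded (x '' Ioo a b)) (hv : ∀ t ∈ Ioo a b, 0 < ε * (w - φ (x t) - g))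
    (hsign : ∀ t ∈ Ioo a b, 0 < ε * (ψ t - α)) : x a ≠ x b := by
  intro hxab
  have hd := h.hasDerivAt_adjoint_zero hε hsign hxab
  obtain ⟨C, hC⟩ := h.exists_hamiltonian_eq_const hφ
  have hmono := strictMonoOn_or_strictAntiOn_of_hasDerivAt hε h.hasDerivAt_state hv
  obtain ⟨lp, lq, hl, hxp, hxq, hpq⟩ := exists_tendsto_csInf_csSup h.lt hmono hxbdd
  obtain ⟨hHp, htan⟩ := h.endpoint_limit hφ hφ' hd hC (by tauto) hxp
  obtain ⟨hHq, -⟩ := h.endpoint_limit hφ hφ' hd hC (by tauto) hxq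
  obtain ⟨ξ, hξ, hlt⟩ := exists_mem_Ioo_lt_sub_mul hconc hconv hα hpq
    (by unfold hamiltonian at hHp hHq; linarith) fun hp =>
      (hφ _).hasDerivAt.congr_deriv (eq_inv_of_mul_eq_one_right (htan hp))
  have hxcont : ContinuousOn x (Ioo a b) :=
    fun t ht => (h.hasDerivAt_state t ht).continuousAt.continuousWithinAt
  obtain ⟨t, ht, rfl⟩ := ((isConnected_Ioo h.lt).image x hxcont).Ioo_csInf_csSup_subset
    hxbdd.bddBelow hxbdd.bddAbove hξ
  have hprod : 0 < (ψ t - α) * (w - φ (x t) - g) := by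
    refine pos_of_mul_pos_right ?_ (sq_nonneg ε)
    linarith [mul_pos (hsign t ht) (hv t ht)]
  have hHt := hC t ht
  unfold hamiltonian at hHt hHp
  nlinarith

end IsBangArc

theorem stmt_7_general (φ : ℝ → ℝ) (g xmin xmax : ℝ)
    (hφdiff : Differentiable ℝ φ)
    (hφ' : ∀ y : ℝ, 0 < deriv φ y)
    (hφ''neg : ∀ y : ℝ, y < 0 → deriv (deriv φ) y < 0)
    (hφ''pos : ∀ y : ℝ, 0 < y → 0 < deriv (deriv φ) y)
    (hmin : φ xmin = -g) (hmax : φ xmax = 1 - g)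
    (T α : ℝ) (hα : 0 < α)
    (x ψ : ℝ → ℝ)
    (hψ : ∀ t ∈ Set.Icc (0:ℝ) T, HasDerivAt ψ (-1 + ψ t * deriv φ (x t)) t)
    (hxrange : ∀ t ∈ Set.Icc (0:ℝ) T, x t ∈ Set.Ioo xmin xmax)
    (hx1 : ∀ t ∈ Set.Icc (0:ℝ) T, α < ψ t → HasDerivAt x (1 - φ (x t) - g) t)
    (hx0 : ∀ t ∈ Set.Icc (0:ℝ) T, ψ t < α → HasDerivAt x (-(φ (x t)) - g) t)
    (x₁ : ℝ)
    (hM : ∀ t ∈ {t ∈ Set.Icc (0:ℝ) T | ψ t = α}, x t = x₁) :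
    ∀ t' ∈ {t ∈ Set.Icc (0:ℝ) T | ψ t = α},
      ∀ t'' ∈ {t ∈ Set.Icc (0:ℝ) T | ψ t = α},
        ∀ s : ℝ, t' ≤ s → s ≤ t'' → s ∈ {t ∈ Set.Icc (0:ℝ) T | ψ t = α} := by
  rintro t' ⟨ht', ht'ψ⟩ t'' ⟨ht'', ht''ψ⟩ s hs' hs''
  refine ⟨⟨ht'.1.trans hs', hs''.trans ht''.2⟩, by_contra fun hsψ => ?_⟩
  obtain ⟨ε, w, hε, hεs, hx, hv⟩ : ∃ ε w : ℝ, ε ≠ 0 ∧ 0 < ε * (ψ s - α) ∧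
      (∀ t ∈ Icc 0 T, 0 < ε * (ψ t - α) → HasDerivAt x (w - φ (x t) - g) t) ∧
      ∀ t ∈ Icc 0 T, 0 < ε * (w - φ (x t) - g) := by
    rcases lt_or_gt_of_ne hsψ with h | h
    · refine ⟨-1, 0, by norm_num, by linarith, fun t ht hψt => ?_, fun t ht => ?_⟩
      · simpa using hx0 t ht (by linarith)
      · linarith [strictMono_of_deriv_pos hφ' (hxrange t ht).1]
    · refine ⟨1, 1, one_ne_zero, by linarith, fun t ht hψt => hx1 t ht (by linarith),
        fun t ht => ?_⟩
      linarith [strictMono_of_deriv_pos hφ' (hxrange t ht).2]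
  obtain ⟨a, b, hta, hab, hbt, hfa, hfb, hpos⟩ := exists_Ioo_forall_pos
    (fun t ht => ((hψ t (Icc_subset_Icc ht'.1 ht''.2 ht)).continuousAt.sub continuousAt_const
      |>.const_mul ε).continuousWithinAt) (by simp [ht'ψ]) (by simp [ht''ψ]) ⟨hs', hs''⟩ hεs
  have hab0 : Icc a b ⊆ Icc 0 T := Icc_subset_Icc (ht'.1.trans hta) (hbt.trans ht''.2)
  have hIoo : Ioo a b ⊆ Icc 0 T := Ioo_subset_Icc_self.trans hab0
  have harc : IsBangArc φ g α w x ψ a b := ⟨hab, fun t ht => hψ t (hab0 ht),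
    by simpa [hε, sub_eq_zero] using hfa, by simpa [hε, sub_eq_zero] using hfb,
    fun t ht => hx t (hIoo ht) (hpos t ht)⟩
  refine harc.state_ne hφdiff
    (strictConcaveOn_of_deriv2_neg (convex_Iic 0) hφdiff.continuous.continuousOn
      fun y hy => hφ''neg y (interior_Iic.subset hy))
    (strictConvexOn_of_deriv2_pos (convex_Ici 0) hφdiff.continuous.continuousOn
      fun y hy => hφ''pos y (interior_Ici.subset hy))
    (fun y hy => (differentiableAt_of_deriv_ne_zero (hφ''neg y hy).ne).continuousAt) hα hε
    ((Metric.isBounded_Ioo xmin xmax).subset (image_subset_iff.2 fun t ht => hxrange t (hIoo ht)))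
    (fun t ht => hv t (hIoo ht)) hpos ?_
  rw [hM a ⟨hab0 (left_mem_Icc.2 hab.le), harc.adjoint_left⟩,
    hM b ⟨hab0 (right_mem_Icc.2 hab.le), harc.adjoint_right⟩]

/-- If the velocity takes a single value on the switching set
    M = {t : ψ t = α}, then M is order-connected (a point or a segment). -/
theorem stmt_7 (φ : ℝ → ℝ) (g xmin xmax : ℝ)
    (hφ0 : φ 0 = 0)
    (hφdiff : Differentiable ℝ φ)
    (hφ' : ∀ y : ℝ, 0 < deriv φ y)
    (hφC2 : ContDiffOn ℝ 2 φ {(0:ℝ)}ᶜ)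
    (hφ''neg : ∀ y : ℝ, y < 0 → deriv (deriv φ) y < 0)
    (hφ''pos : ∀ y : ℝ, 0 < y → 0 < deriv (deriv φ) y)
    (hg0 : 0 < g) (hg1 : g < 1)
    (hxminneg : xmin < 0) (hxmaxpos : 0 < xmax)
    (hmin : φ xmin = -g) (hmax : φ xmax = 1 - g)
    (T α : ℝ) (hT : 0 < T) (hα : 0 < α)
    (x ψ : ℝ → ℝ)
    (hψ : ∀ t ∈ Set.Icc (0:ℝ) T, HasDerivAt ψ (-1 + ψ t * deriv φ (x t)) t)
    (hxrange : ∀ t ∈ Set.Icc (0:ℝ) T, x t ∈ Set.Ioo xmin xmax)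
    (hx1 : ∀ t ∈ Set.Icc (0:ℝ) T, α < ψ t → HasDerivAt x (1 - φ (x t) - g) t)
    (hx0 : ∀ t ∈ Set.Icc (0:ℝ) T, ψ t < α → HasDerivAt x (-(φ (x t)) - g) t)
    (x₁ : ℝ)
    (hM : ∀ t ∈ {t ∈ Set.Icc (0:ℝ) T | ψ t = α}, x t = x₁) :
    ∀ t' ∈ {t ∈ Set.Icc (0:ℝ) T | ψ t = α},
      ∀ t'' ∈ {t ∈ Set.Icc (0:ℝ) T | ψ t = α},
        ∀ s : ℝ, t' ≤ s → s ≤ t'' → s ∈ {t ∈ Set.Icc (0:ℝ) T | ψ t = α} :=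
  stmt_7_general φ g xmin xmax hφdiff hφ' hφ''neg hφ''pos hmin hmax T α hα x ψ hψ hxrange hx1 hx0 x₁
    hM
end

section
/- There do not exist T > 0, α > 0, x₁ ≤ 0, differentiable functions x, ψ : [0,T] → ℝ, and an integrable function u : [0,T] → [0,1] such that: x(0) = 0; x'(t) = u(t) − φ(x(t)) − g and ψ'(t) = −1 + ψ(t)·φ'(x(t)) for all t ∈ [0,T]; ψ(T) = 0; u(t) = 1 whenever ψ(t) > α and u(t) = 0 whenever ψ(t) < α; x(t) ∈ (x_min, x_max) for all t; x(t) = x₁ for every t ∈ [0,T] with ψ(t) = α; and ∫₀ᵀ u(t) dt > 0. (In the paper's terminology: if the set X_C of velocity values attained on the switching set M = {t : ψ(t) = α} is a singleton {x₁} with x₁ ≤ 0, then the trajectory does not satisfy the Pontryagin maximum principle.) -/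
/-!
At every switching time (`ψ = α`, hence `x = x₁`) the adjoint equation gives the same slope
`ψ' = c := -1 + α φ'(x₁)`. Since `∫ u > 0`, `ψ ≥ α` somewhere, while `ψ T = 0 < α`; so there is a
last switching time `t₀ > 0`, after which `ψ < α`, and `c ≤ 0`.
If `c < 0`, `ψ` can cross `α` only downwards, so `ψ > α` and `u = 1` on `[0, t₀)`; then `x`
increases strictly there, contradicting `x t₀ = x₁ ≤ 0 = x 0`.
If `c = 0`, then `φ'(x₁) = 1 / α`. After `t₀` we have `u = 0`, so `x` decreases below `x₁ ≤ 0`,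
where concavity of `φ` gives `φ'(x) ≥ 1 / α`. As long as `ψ ≥ 0` this yields
`(α - ψ)' ≤ (α - ψ) / α`, and Grönwall keeps `ψ ≥ α`, which is absurd before `ψ` reaches `0`.
-/

open Set Filter Topology

theorem HasDerivAt.nonneg_of_isLocalMinOn_Ici {f : ℝ → ℝ} {f' a : ℝ} (hf : HasDerivAt f f' a)
    (h : IsLocalMinOn f (Ici a) a) : 0 ≤ f' := by
  have hmem : (1 : ℝ) ∈ posTangentConeAt (Ici a) a :=
    mem_posTangentConeAt_of_segment_subset (by simp [segment_eq_Icc, Icc_subset_Ici_self])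
  simpa using h.hasFDerivWithinAt_nonneg hf.hasDerivWithinAt hmem

theorem HasDerivAt.nonneg_of_isLocalMaxOn_Iic {f : ℝ → ℝ} {f' a : ℝ} (hf : HasDerivAt f f' a)
    (h : IsLocalMaxOn f (Iic a) a) : 0 ≤ f' := by
  have hmem : (-1 : ℝ) ∈ posTangentConeAt (Iic a) a :=
    mem_posTangentConeAt_of_segment_subset (by
      rw [segment_symm, segment_eq_Icc (by linarith)]; exact Icc_subset_Iic_self)
  simpa using h.hasFDerivWithinAt_nonpos hf.hasDerivWithinAt hmem

theorem ContinuousOn.exists_first_eq {f : ℝ → ℝ} {a b c : ℝ} (hab : a ≤ b)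
    (hf : ContinuousOn f (Icc a b)) (ha : f a < c) (hb : c ≤ f b) :
    ∃ r ∈ Ioc a b, f r = c ∧ ∀ s ∈ Ico a r, f s < c := by
  have hS : IsCompact (Icc a b ∩ f ⁻¹' Ici c) := isCompact_Icc.of_isClosed_subset
    (hf.preimage_isClosed_of_isClosed isClosed_Icc isClosed_Ici) inter_subset_left
  obtain ⟨r, ⟨hr, hcr⟩, hleast⟩ := hS.exists_isLeast ⟨b, right_mem_Icc.2 hab, hb⟩
  have hbefore : ∀ s ∈ Ico a r, f s < c := fun s hs =>
    lt_of_not_ge fun hcs => hs.2.not_ge (hleast ⟨⟨hs.1, hs.2.le.trans hr.2⟩, hcs⟩)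
  obtain ⟨s, hs, hfs⟩ :=
    intermediate_value_Icc hr.1 (hf.mono (Icc_subset_Icc_right hr.2)) ⟨ha.le, hcr⟩
  obtain rfl : s = r := le_antisymm hs.2 (hleast ⟨⟨hs.1, hs.2.trans hr.2⟩, hfs.ge⟩)
  exact ⟨s, ⟨hr.1.lt_of_ne (by rintro rfl; exact ha.not_ge hcr), hr.2⟩, hfs, hbefore⟩

theorem ContinuousOn.exists_last_eq {f : ℝ → ℝ} {a b c : ℝ} (hab : a ≤ b)
    (hf : ContinuousOn f (Icc a b)) (ha : c ≤ f a) (hb : f b < c) :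
    ∃ r ∈ Ico a b, f r = c ∧ ∀ s ∈ Ioc r b, f s < c := by
  have hS : IsCompact (Icc a b ∩ f ⁻¹' Ici c) := isCompact_Icc.of_isClosed_subset
    (hf.preimage_isClosed_of_isClosed isClosed_Icc isClosed_Ici) inter_subset_left
  obtain ⟨r, ⟨hr, hcr⟩, hgreatest⟩ := hS.exists_isGreatest ⟨a, left_mem_Icc.2 hab, ha⟩
  have hafter : ∀ s ∈ Ioc r b, f s < c := fun s hs =>
    lt_of_not_ge fun hcs => hs.1.not_ge (hgreatest ⟨⟨hr.1.trans hs.1.le, hs.2⟩, hcs⟩)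
  obtain ⟨s, hs, hfs⟩ :=
    intermediate_value_Icc' hr.2 (hf.mono (Icc_subset_Icc_left hr.1)) ⟨hb.le, hcr⟩
  obtain rfl : s = r := le_antisymm (hgreatest ⟨⟨hr.1.trans hs.1, hs.2⟩, hfs.ge⟩) hs.1
  exact ⟨s, ⟨hr.1, hr.2.lt_of_ne (by rintro rfl; exact hb.not_ge hcr)⟩, hfs, hafter⟩

theorem pos_of_hasDerivAt_neg_of_eq_zero {f f' : ℝ → ℝ} {a b : ℝ}
    (hf : ∀ t ∈ Icc a b, HasDerivAt f (f' t) t) (hneg : ∀ t ∈ Icc a b, f t = 0 → f' t < 0)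
    (hb : 0 ≤ f b) : ∀ t ∈ Ico a b, 0 < f t := by
  have hcont : ContinuousOn f (Icc a b) := fun t ht => (hf t ht).continuousAt.continuousWithinAt
  have hnonneg : ∀ s ∈ Icc a b, 0 ≤ f s := by
    intro s hs
    by_contra! hfs
    obtain ⟨r, hr, hfr, hbefore⟩ :=
      (hcont.mono (Icc_subset_Icc_left hs.1)).exists_first_eq hs.2 hfs hb
    have hr' : r ∈ Icc a b := ⟨hs.1.trans hr.1.le, hr.2⟩
    refine (hneg r hr' hfr).not_ge ((hf r hr').nonneg_of_isLocalMaxOn_Iic ?_)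
    filter_upwards [Ioc_mem_nhdsLE hr.1] with t ht
    rcases ht.2.lt_or_eq with ht' | rfl
    · exact hfr ▸ (hbefore t ⟨ht.1.le, ht'⟩).le
    · exact le_rfl
  intro t ht
  refine (hnonneg t (Ico_subset_Icc_self ht)).lt_of_ne' fun hft => ?_
  refine (hneg t (Ico_subset_Icc_self ht) hft).not_ge
    ((hf t (Ico_subset_Icc_self ht)).nonneg_of_isLocalMinOn_Ici ?_)
  filter_upwards [Ico_mem_nhdsGE ht.2] with s hs
  exact hft ▸ hnonneg s ⟨ht.1.trans hs.1, hs.2.le⟩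

theorem antitoneOn_deriv_Iic_of_deriv2_nonpos {φ : ℝ → ℝ} {a : ℝ} (hφ : Differentiable ℝ φ)
    (hφ' : DifferentiableOn ℝ (deriv φ) (Iio a)) (hφ'' : ∀ y < a, deriv (deriv φ) y ≤ 0) :
    AntitoneOn (deriv φ) (Iic a) := by
  refine ConcaveOn.antitoneOn_deriv ?_ fun y _ => hφ y
  refine concaveOn_of_deriv2_nonpos (convex_Iic a) hφ.continuous.continuousOn
    hφ.differentiableOn (by rwa [interior_Iic]) fun y hy => ?_
  rw [interior_Iic] at hy
  simpa using hφ'' y hy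

/-- A trajectory satisfying the maximum principle whose switching set `{t | ψ t = α}` has velocity
set `X_C = {x₁}`. -/
structure SwitchingExtremal (φ : ℝ → ℝ) (g xmin xmax T α x₁ : ℝ) (x ψ u : ℝ → ℝ) : Prop where
  T_pos : 0 < T
  α_pos : 0 < α
  x₁_nonpos : x₁ ≤ 0
  x_zero : x 0 = 0
  hasDerivAt_x : ∀ t ∈ Icc 0 T, HasDerivAt x (u t - φ (x t) - g) t
  hasDerivAt_ψ : ∀ t ∈ Icc 0 T, HasDerivAt ψ (-1 + ψ t * deriv φ (x t)) t
  ψ_T : ψ T = 0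
  u_eq_one : ∀ t ∈ Icc 0 T, α < ψ t → u t = 1
  u_eq_zero : ∀ t ∈ Icc 0 T, ψ t < α → u t = 0
  x_mem : ∀ t ∈ Icc 0 T, x t ∈ Ioo xmin xmax
  x_eq_of_ψ_eq : ∀ t ∈ Icc 0 T, ψ t = α → x t = x₁
  integral_pos : 0 < ∫ t in (0 : ℝ)..T, u t

namespace SwitchingExtremal

variable {φ : ℝ → ℝ} {g xmin xmax T α x₁ : ℝ} {x ψ u : ℝ → ℝ}

theorem continuousOn_x (E : SwitchingExtremal φ g xmin xmax T α x₁ x ψ u) :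
    ContinuousOn x (Icc 0 T) :=
  fun t ht => (E.hasDerivAt_x t ht).continuousAt.continuousWithinAt

theorem continuousOn_ψ (E : SwitchingExtremal φ g xmin xmax T α x₁ x ψ u) :
    ContinuousOn ψ (Icc 0 T) :=
  fun t ht => (E.hasDerivAt_ψ t ht).continuousAt.continuousWithinAt

theorem hasDerivAt_ψ_of_eq (E : SwitchingExtremal φ g xmin xmax T α x₁ x ψ u) {t : ℝ}
    (ht : t ∈ Icc 0 T) (hψt : ψ t = α) : HasDerivAt ψ (-1 + α * deriv φ x₁) t := by
  have h := E.hasDerivAt_ψ t ht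
  rwa [hψt, E.x_eq_of_ψ_eq t ht hψt] at h

theorem strictMonoOn_x (E : SwitchingExtremal φ g xmin xmax T α x₁ x ψ u) (hφ : StrictMono φ)
    (hmax : φ xmax = 1 - g) {a b : ℝ} (hab : Icc a b ⊆ Icc 0 T) (hψ : ∀ t ∈ Ioo a b, α < ψ t) :
    StrictMonoOn x (Icc a b) := by
  refine strictMonoOn_of_hasDerivWithinAt_pos (convex_Icc a b) (E.continuousOn_x.mono hab)
    (fun t ht => (E.hasDerivAt_x t (hab (interior_subset ht))).hasDerivWithinAt) fun t ht => ?_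
  rw [interior_Icc] at ht
  have ht' := hab (Ioo_subset_Icc_self ht)
  have hφx : φ (x t) < 1 - g := hmax ▸ hφ (E.x_mem t ht').2
  rw [E.u_eq_one t ht' (hψ t ht)]
  linarith

theorem antitoneOn_x (E : SwitchingExtremal φ g xmin xmax T α x₁ x ψ u) (hφ : Monotone φ)
    (hmin : φ xmin = -g) {a b : ℝ} (hab : Icc a b ⊆ Icc 0 T) (hψ : ∀ t ∈ Ioo a b, ψ t < α) :
    AntitoneOn x (Icc a b) := by
  refine antitoneOn_of_hasDerivWithinAt_nonpos (convex_Icc a b) (E.continuousOn_x.mono hab)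
    (fun t ht => (E.hasDerivAt_x t (hab (interior_subset ht))).hasDerivWithinAt) fun t ht => ?_
  rw [interior_Icc] at ht
  have ht' := hab (Ioo_subset_Icc_self ht)
  have hφx : -g ≤ φ (x t) := hmin ▸ hφ (E.x_mem t ht').1.le
  rw [E.u_eq_zero t ht' (hψ t ht)]
  linarith

theorem exists_mem_Ioc_le_ψ (E : SwitchingExtremal φ g xmin xmax T α x₁ x ψ u) :
    ∃ s ∈ Ioc 0 T, α ≤ ψ s := by
  by_contra! h
  have hu : EqOn u 0 (Ioc 0 T) := fun t ht => E.u_eq_zero t (Ioc_subset_Icc_self ht) (h t ht)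
  have hpos := E.integral_pos
  rw [intervalIntegral.integral_of_le E.T_pos.le,
    MeasureTheory.setIntegral_congr_fun measurableSet_Ioc hu] at hpos
  simp at hpos

theorem exists_last_switch (E : SwitchingExtremal φ g xmin xmax T α x₁ x ψ u) :
    ∃ t₀ ∈ Ioo 0 T, ψ t₀ = α ∧ ∀ t ∈ Ioc t₀ T, ψ t < α := by
  obtain ⟨s, hs, hψs⟩ := E.exists_mem_Ioc_le_ψ
  obtain ⟨t₀, ht₀, hψt₀, hafter⟩ := (E.continuousOn_ψ.mono (Icc_subset_Icc_left hs.1.le))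
    |>.exists_last_eq hs.2 hψs (E.ψ_T ▸ E.α_pos)
  exact ⟨t₀, ⟨hs.1.trans_le ht₀.1, ht₀.2⟩, hψt₀, hafter⟩

theorem switch_slope_nonpos (E : SwitchingExtremal φ g xmin xmax T α x₁ x ψ u) {t₀ : ℝ}
    (ht₀ : t₀ ∈ Ioo 0 T) (hψt₀ : ψ t₀ = α) (hafter : ∀ t ∈ Ioc t₀ T, ψ t < α) :
    -1 + α * deriv φ x₁ ≤ 0 := by
  refine neg_nonneg.1 ((E.hasDerivAt_ψ_of_eq (Ioo_subset_Icc_self ht₀) hψt₀).neg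
    |>.nonneg_of_isLocalMinOn_Ici ?_)
  filter_upwards [Ico_mem_nhdsGE ht₀.2] with t ht
  rcases ht.1.eq_or_lt with rfl | ht'
  · exact le_rfl
  · simpa [hψt₀] using (hafter t ⟨ht', ht.2.le⟩).le

theorem false_of_switch_slope_neg (E : SwitchingExtremal φ g xmin xmax T α x₁ x ψ u)
    (hφ : StrictMono φ) (hmax : φ xmax = 1 - g) {t₀ : ℝ} (ht₀ : t₀ ∈ Ioo 0 T) (hψt₀ : ψ t₀ = α)
    (hc : -1 + α * deriv φ x₁ < 0) : False := by
  have hsub : Icc 0 t₀ ⊆ Icc 0 T := Icc_subset_Icc_right ht₀.2.le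
  have hψ_gt : ∀ t ∈ Ico 0 t₀, 0 < ψ t - α :=
    pos_of_hasDerivAt_neg_of_eq_zero (fun t ht => (E.hasDerivAt_ψ t (hsub ht)).sub_const α)
      (fun t ht h => by
        rw [sub_eq_zero] at h
        rwa [h, E.x_eq_of_ψ_eq t (hsub ht) h])
      (by simp [hψt₀])
  have hx := E.strictMonoOn_x hφ hmax hsub fun t ht => sub_pos.1 (hψ_gt t (Ioo_subset_Ico_self ht))
  have h := hx (left_mem_Icc.2 ht₀.1.le) (right_mem_Icc.2 ht₀.1.le) ht₀.1
  rw [E.x_zero, E.x_eq_of_ψ_eq t₀ (Ioo_subset_Icc_self ht₀) hψt₀] at h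
  exact h.not_ge E.x₁_nonpos

theorem false_of_switch_slope_eq_zero (E : SwitchingExtremal φ g xmin xmax T α x₁ x ψ u)
    (hφ : Monotone φ) (hmin : φ xmin = -g) (hφ' : AntitoneOn (deriv φ) (Iic 0)) {t₀ : ℝ}
    (ht₀ : t₀ ∈ Ioo 0 T) (hψt₀ : ψ t₀ = α) (hafter : ∀ t ∈ Ioc t₀ T, ψ t < α)
    (hc : -1 + α * deriv φ x₁ = 0) : False := by
  have hα := E.α_pos
  obtain ⟨t₂, ht₂, hψt₂, hψ_pos⟩ := (E.continuousOn_ψ.mono (Icc_subset_Icc_left ht₀.1.le)).neg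
    |>.exists_first_eq (c := 0) ht₀.2.le (by simp [hψt₀, hα]) (by simp [E.ψ_T])
  simp only [Pi.neg_apply, neg_eq_zero, neg_lt_zero] at hψt₂ hψ_pos
  have hsub : Icc t₀ t₂ ⊆ Icc 0 T := Icc_subset_Icc ht₀.1.le ht₂.2
  have hx_le : ∀ t ∈ Icc t₀ t₂, x t ≤ x₁ := fun t ht => by
    have hx := E.antitoneOn_x hφ hmin hsub fun s hs => hafter s ⟨hs.1, hs.2.le.trans ht₂.2⟩
    simpa only [E.x_eq_of_ψ_eq t₀ (Ioo_subset_Icc_self ht₀) hψt₀] using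
      hx (left_mem_Icc.2 ht₂.1.le) ht ht.1
  have hφ'x₁ : deriv φ x₁ = 1 / α := by
    field_simp
    linarith
  have hbound : ∀ t ∈ Ico t₀ t₂, -(-1 + ψ t * deriv φ (x t)) ≤ 1 / α * (α - ψ t) + 0 := by
    intro t ht
    have hxt := hx_le t (Ico_subset_Icc_self ht)
    have hφ'x : 1 / α ≤ deriv φ (x t) := hφ'x₁ ▸ hφ' (hxt.trans E.x₁_nonpos) E.x₁_nonpos hxt
    calc -(-1 + ψ t * deriv φ (x t)) ≤ 1 - ψ t * (1 / α) := by
          linarith [mul_le_mul_of_nonneg_left hφ'x (hψ_pos t ht).le]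
      _ = 1 / α * (α - ψ t) + 0 := by field_simp; ring
  have hgronwall := le_gronwallBound_of_liminf_deriv_right_le (f := fun t => α - ψ t) (δ := 0)
    (continuousOn_const.sub (E.continuousOn_ψ.mono hsub))
    (fun t ht _ hr => ((E.hasDerivAt_ψ t (hsub (Ico_subset_Icc_self ht))).const_sub α)
      |>.hasDerivWithinAt.liminf_right_slope_le hr)
    (by simp [hψt₀]) hbound t₂ (right_mem_Icc.2 ht₂.1.le)
  rw [gronwallBound_ε0_δ0] at hgronwall
  linarith

end SwitchingExtremal

theorem stmt_8_general (φ : ℝ → ℝ) (g xmin xmax : ℝ)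
    (hφdiff : Differentiable ℝ φ)
    (hφ' : ∀ y : ℝ, 0 < deriv φ y)
    (hφC2 : ContDiffOn ℝ 2 φ {(0:ℝ)}ᶜ)
    (hφ''neg : ∀ y : ℝ, y < 0 → deriv (deriv φ) y < 0)
    (hmin : φ xmin = -g) (hmax : φ xmax = 1 - g) :
    ¬ ∃ (T α x₁ : ℝ) (x ψ u : ℝ → ℝ),
      0 < T ∧ 0 < α ∧ x₁ ≤ 0 ∧
      x 0 = 0 ∧
      (∀ t ∈ Set.Icc (0:ℝ) T, u t ∈ Set.Icc (0:ℝ) 1) ∧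
      IntervalIntegrable u MeasureTheory.volume 0 T ∧
      (∀ t ∈ Set.Icc (0:ℝ) T, HasDerivAt x (u t - φ (x t) - g) t) ∧
      (∀ t ∈ Set.Icc (0:ℝ) T, HasDerivAt ψ (-1 + ψ t * deriv φ (x t)) t) ∧
      ψ T = 0 ∧
      (∀ t ∈ Set.Icc (0:ℝ) T, α < ψ t → u t = 1) ∧
      (∀ t ∈ Set.Icc (0:ℝ) T, ψ t < α → u t = 0) ∧
      (∀ t ∈ Set.Icc (0:ℝ) T, x t ∈ Set.Ioo xmin xmax) ∧
      (∀ t ∈ Set.Icc (0:ℝ) T, ψ t = α → x t = x₁) ∧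
      0 < ∫ t in (0:ℝ)..T, u t := by
  rintro ⟨T, α, x₁, x, ψ, u, hT, hα, hx₁, hx0, -, -, hx, hψ, hψT, hu1, hu0, hxin, hswitch, hupos⟩
  have E : SwitchingExtremal φ g xmin xmax T α x₁ x ψ u :=
    ⟨hT, hα, hx₁, hx0, hx, hψ, hψT, hu1, hu0, hxin, hswitch, hupos⟩
  have hφ_mono : StrictMono φ := strictMono_of_deriv_pos hφ'
  have hφ'_anti : AntitoneOn (deriv φ) (Iic 0) :=
    antitoneOn_deriv_Iic_of_deriv2_nonpos hφdiff
      (((hφC2.deriv_of_isOpen isOpen_compl_singleton le_rfl).differentiableOn one_ne_zero).mono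
        fun y hy => ne_of_lt hy)
      fun y hy => (hφ''neg y hy).le
  obtain ⟨t₀, ht₀, hψt₀, hafter⟩ := E.exists_last_switch
  rcases (E.switch_slope_nonpos ht₀ hψt₀ hafter).lt_or_eq with hc | hc
  · exact E.false_of_switch_slope_neg hφ_mono hmax ht₀ hψt₀ hc
  · exact E.false_of_switch_slope_eq_zero hφ_mono.monotone hmin hφ'_anti ht₀ hψt₀ hafter hc

/-- If the velocity on the switching set takes the single value
    x₁ ≤ 0, the trajectory does not satisfy the maximum principle. -/
theorem stmt_8 (φ : ℝ → ℝ) (g xmin xmax : ℝ)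
    (hφ0 : φ 0 = 0)
    (hφdiff : Differentiable ℝ φ)
    (hφ' : ∀ y : ℝ, 0 < deriv φ y)
    (hφC2 : ContDiffOn ℝ 2 φ {(0:ℝ)}ᶜ)
    (hφ''neg : ∀ y : ℝ, y < 0 → deriv (deriv φ) y < 0)
    (hφ''pos : ∀ y : ℝ, 0 < y → 0 < deriv (deriv φ) y)
    (hg0 : 0 < g) (hg1 : g < 1)
    (hxminneg : xmin < 0) (hxmaxpos : 0 < xmax)
    (hmin : φ xmin = -g) (hmax : φ xmax = 1 - g) :
    ¬ ∃ (T α x₁ : ℝ) (x ψ u : ℝ → ℝ),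
      0 < T ∧ 0 < α ∧ x₁ ≤ 0 ∧
      x 0 = 0 ∧
      (∀ t ∈ Set.Icc (0:ℝ) T, u t ∈ Set.Icc (0:ℝ) 1) ∧
      IntervalIntegrable u MeasureTheory.volume 0 T ∧
      (∀ t ∈ Set.Icc (0:ℝ) T, HasDerivAt x (u t - φ (x t) - g) t) ∧
      (∀ t ∈ Set.Icc (0:ℝ) T, HasDerivAt ψ (-1 + ψ t * deriv φ (x t)) t) ∧
      ψ T = 0 ∧
      (∀ t ∈ Set.Icc (0:ℝ) T, α < ψ t → u t = 1) ∧
      (∀ t ∈ Set.Icc (0:ℝ) T, ψ t < α → u t = 0) ∧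
      (∀ t ∈ Set.Icc (0:ℝ) T, x t ∈ Set.Ioo xmin xmax) ∧
      (∀ t ∈ Set.Icc (0:ℝ) T, ψ t = α → x t = x₁) ∧
      0 < ∫ t in (0:ℝ)..T, u t :=
  stmt_8_general φ g xmin xmax hφdiff hφ' hφC2 hφ''neg hmin hmax
end

section
/- Let α > 0 and t₁ < t₂. Let x : [t₁,t₂] → ℝ be continuous and ψ : [t₁,t₂] → ℝ differentiable with ψ(t) = α for all t ∈ [t₁,t₂] and ψ'(t) = −1 + ψ(t)·φ'(x(t)) for all t ∈ [t₁,t₂]. Then φ'(x(t)) = 1/α for all t ∈ [t₁,t₂], and x is constant on [t₁,t₂] (since the level set {y : φ'(y) = 1/α} contains at most two points, φ' being strictly decreasing on (−∞,0) and strictly increasing on (0,∞)). If moreover x is differentiable with x'(t) = u(t) − φ(x(t)) − g for a function u on (t₁,t₂), then the singular control satisfies u(t) = φ(x(t₁)) + g for all t ∈ (t₁,t₂). -/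
/-!
On the arc `ψ ≡ α` we have `ψ' = 0`, so the adjoint equation reads `α φ'(x t) = 1`. Since `φ''`
has a fixed sign on each side of `0`, `φ'` is injective on `(-∞, 0)` and on `(0, ∞)`, so its
level set `{y | φ' y = 1/α}` is finite. The continuous `x` maps the connected interval into this
finite set, hence is constant; then `x' = 0`, which is `u = φ(x t₁) + g`.
-/

open Set

theorem eq_zero_of_hasDerivAt_of_eqOn_Icc {F : Type*} [NormedAddCommGroup F] [NormedSpace ℝ F]
    {f : ℝ → F} {f' c : F} {a b t : ℝ} (hab : a < b) (hf : EqOn f (fun _ => c) (Icc a b))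
    (ht : t ∈ Icc a b) (hd : HasDerivAt f f' t) : f' = 0 :=
  (uniqueDiffOn_Icc hab t ht).eq_deriv _ hd.hasDerivWithinAt
    ((hasDerivWithinAt_const t _ c).congr hf (hf ht))

/-- A nonzero `deriv f y` forces `f` to be differentiable at `y` (`deriv` is `0` elsewhere), which
supplies the continuity that `strictMonoOn_of_deriv_pos` asks for. -/
theorem strictMonoOn_of_deriv_pos_of_isOpen {D : Set ℝ} (hD : Convex ℝ D) (hDo : IsOpen D)
    {f : ℝ → ℝ} (hf : ∀ y ∈ D, 0 < deriv f y) : StrictMonoOn f D :=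
  strictMonoOn_of_deriv_pos hD
    (fun y hy => (differentiableAt_of_deriv_ne_zero (hf y hy).ne').continuousAt.continuousWithinAt)
    (by rwa [hDo.interior_eq])

theorem strictAntiOn_of_deriv_neg_of_isOpen_s9 {D : Set ℝ} (hD : Convex ℝ D) (hDo : IsOpen D)
    {f : ℝ → ℝ} (hf : ∀ y ∈ D, deriv f y < 0) : StrictAntiOn f D :=
  strictAntiOn_of_deriv_neg hD
    (fun y hy => (differentiableAt_of_deriv_ne_zero (hf y hy).ne).continuousAt.continuousWithinAt)
    (by rwa [hDo.interior_eq])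

theorem finite_preimage_singleton_of_injOn_Iio_of_injOn_Ioi {α β : Type*} [LinearOrder α]
    {f : α → β} {a : α} (h₁ : InjOn f (Iio a)) (h₂ : InjOn f (Ioi a)) (c : β) :
    (f ⁻¹' {c}).Finite := by
  have hfin : ∀ s, InjOn f s → (s ∩ f ⁻¹' {c}).Finite := fun s hs =>
    ((finite_singleton c).subset (image_subset_iff.mpr inter_subset_right)).of_finite_image
      (hs.mono inter_subset_left)
  refine (((hfin _ h₁).union (finite_singleton a)).union (hfin _ h₂)).subset fun y hy => ?_
  rcases lt_trichotomy y a with h | rfl | h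
  · exact Or.inl (Or.inl ⟨h, hy⟩)
  · exact Or.inl (Or.inr rfl)
  · exact Or.inr ⟨h, hy⟩

theorem stmt_9_general (φ : ℝ → ℝ) (g : ℝ)
    (hφ''neg : ∀ y : ℝ, y < 0 → deriv (deriv φ) y < 0)
    (hφ''pos : ∀ y : ℝ, 0 < y → 0 < deriv (deriv φ) y)
    (α : ℝ)
    (t₁ t₂ : ℝ) (ht : t₁ < t₂)
    (x ψ u : ℝ → ℝ)
    (hxcont : ContinuousOn x (Set.Icc t₁ t₂))
    (hψeq : ∀ t ∈ Set.Icc t₁ t₂, ψ t = α)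
    (hψ : ∀ t ∈ Set.Icc t₁ t₂, HasDerivAt ψ (-1 + ψ t * deriv φ (x t)) t) :
    (∀ t ∈ Set.Icc t₁ t₂, deriv φ (x t) = 1 / α) ∧
    (∀ t ∈ Set.Icc t₁ t₂, x t = x t₁) ∧
    ((∀ t ∈ Set.Ioo t₁ t₂, HasDerivAt x (u t - φ (x t) - g) t) →
      ∀ t ∈ Set.Ioo t₁ t₂, u t = φ (x t₁) + g) := by
  have hlevel : ∀ t ∈ Icc t₁ t₂, deriv φ (x t) = 1 / α := fun t htI => by
    have h := eq_zero_of_hasDerivAt_of_eqOn_Icc ht hψeq htI (hψ t htI)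
    rw [hψeq t htI] at h
    exact eq_one_div_of_mul_eq_one_right (by linarith)
  have hfinite : (deriv φ ⁻¹' {1 / α}).Finite :=
    finite_preimage_singleton_of_injOn_Iio_of_injOn_Ioi
      (strictAntiOn_of_deriv_neg_of_isOpen_s9 (convex_Iio 0) isOpen_Iio hφ''neg).injOn
      (strictMonoOn_of_deriv_pos_of_isOpen (convex_Ioi 0) isOpen_Ioi hφ''pos).injOn _
  have hconst : ∀ t ∈ Icc t₁ t₂, x t = x t₁ := fun t htI =>
    isPreconnected_Icc.constant_of_mapsTo hfinite.isDiscrete hxcont hlevel htI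
      (left_mem_Icc.mpr ht.le)
  refine ⟨hlevel, hconst, fun hx t htI => ?_⟩
  have h := eq_zero_of_hasDerivAt_of_eqOn_Icc ht hconst (Ioo_subset_Icc_self htI) (hx t htI)
  rw [hconst t (Ioo_subset_Icc_self htI)] at h
  linarith

/-- On a singular arc ψ ≡ α one has φ'(x(t)) = 1/α, x is constant,
    and the singular control equals φ(x(t₁)) + g. -/
theorem stmt_9 (φ : ℝ → ℝ) (g xmin xmax : ℝ)
    (hφ0 : φ 0 = 0)
    (hφdiff : Differentiable ℝ φ)
    (hφ' : ∀ y : ℝ, 0 < deriv φ y)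
    (hφC2 : ContDiffOn ℝ 2 φ {(0:ℝ)}ᶜ)
    (hφ''neg : ∀ y : ℝ, y < 0 → deriv (deriv φ) y < 0)
    (hφ''pos : ∀ y : ℝ, 0 < y → 0 < deriv (deriv φ) y)
    (hg0 : 0 < g) (hg1 : g < 1)
    (hxminneg : xmin < 0) (hxmaxpos : 0 < xmax)
    (hmin : φ xmin = -g) (hmax : φ xmax = 1 - g)
    (α : ℝ) (hα : 0 < α)
    (t₁ t₂ : ℝ) (ht : t₁ < t₂)
    (x ψ u : ℝ → ℝ)
    (hxcont : ContinuousOn x (Set.Icc t₁ t₂))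
    (hψeq : ∀ t ∈ Set.Icc t₁ t₂, ψ t = α)
    (hψ : ∀ t ∈ Set.Icc t₁ t₂, HasDerivAt ψ (-1 + ψ t * deriv φ (x t)) t) :
    (∀ t ∈ Set.Icc t₁ t₂, deriv φ (x t) = 1 / α) ∧
    (∀ t ∈ Set.Icc t₁ t₂, x t = x t₁) ∧
    ((∀ t ∈ Set.Ioo t₁ t₂, HasDerivAt x (u t - φ (x t) - g) t) →
      ∀ t ∈ Set.Ioo t₁ t₂, u t = φ (x t₁) + g) :=
  stmt_9_general φ g hφ''neg hφ''pos α t₁ t₂ ht x ψ u hxcont hψeq hψ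
end

section
/- Let α > 0 and t' < t''. Let x, ψ : [t',t''] → ℝ be differentiable with x'(t) = −φ(x(t)) − g and ψ'(t) = −1 + ψ(t)·φ'(x(t)) on [t',t''] (dynamics with control u = 0). Assume: ψ(t') = α; ψ(t) < α for all t in some right neighbourhood (t', t'+ε) of t'; ψ(t) > 0 on (t',t''); x(t) > 0 for all t ∈ (t',t''); and x(t'') = 0. Then ψ is twice differentiable on (t',t'') and ψ''(t) < 0 for all t ∈ (t',t''). -/
/-!
Along the arc `x > 0`, hence `ẋ = -φ(x) - g < 0` and `φ''(x) > 0`. Differentiating the adjoint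
equation gives `ψ'' = ψ' φ'(x) + ψ φ''(x) ẋ`, whose second term is negative since `ψ > 0`.
Hence `ψ'' < 0` wherever `ψ' ≤ 0`. At the start `ψ' ≤ 0` because `ψ` falls below its initial
value `α`, and `ψ'` can never cross zero upwards since it has negative derivative at each of its
zeros; so `ψ' ≤ 0`, and therefore `ψ'' < 0`, on the whole arc.
-/

open Set

lemma HasDerivAt.nonpos_of_isLocalMaxOn_Ici {f : ℝ → ℝ} {f' a : ℝ} (hf : HasDerivAt f f' a)
    (hmax : IsLocalMaxOn f (Ici a) a) : f' ≤ 0 := by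
  have h1 : (1 : ℝ) ∈ posTangentConeAt (Ici a) a :=
    mem_posTangentConeAt_of_segment_subset fun y hy => by
      simpa using (segment_eq_Icc (by linarith : a ≤ a + 1) ▸ hy).1
  simpa using hmax.hasFDerivWithinAt_nonpos hf.hasFDerivAt.hasFDerivWithinAt h1

lemma lt_of_hasDerivAt_neg {f f' : ℝ → ℝ} {a b : ℝ} (hab : a < b)
    (hf : ∀ s ∈ Icc a b, HasDerivAt f (f' s) s) (hf' : ∀ s ∈ Ioo a b, f' s < 0) : f b < f a := by
  obtain ⟨c, hc, hslope⟩ := exists_hasDerivAt_eq_slope f f' hab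
    (fun s hs => (hf s hs).continuousAt.continuousWithinAt)
    (fun s hs => hf s (Ioo_subset_Icc_self hs))
  have := hf' c hc
  rw [hslope, div_neg_iff] at this
  rcases this with ⟨-, h⟩ | ⟨h, -⟩ <;> linarith

section Friction

variable {φ : ℝ → ℝ} {g : ℝ}

lemma neg_friction_sub_neg (hφ0 : φ 0 = 0) (hφ' : ∀ y, 0 < deriv φ y) (hg : 0 < g)
    {y : ℝ} (hy : 0 < y) : -φ y - g < 0 := by
  have : φ 0 < φ y := strictMono_of_deriv_pos hφ' hy
  linarith

lemma differentiableAt_deriv_of_ne_zero (hφC2 : ContDiffOn ℝ 2 φ {(0 : ℝ)}ᶜ) {y : ℝ}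
    (hy : y ≠ 0) : DifferentiableAt ℝ (deriv φ) y :=
  ((hφC2.deriv_of_isOpen isOpen_compl_singleton (by norm_num)).contDiffAt
    (isOpen_compl_singleton.mem_nhds hy)).differentiableAt one_ne_zero

lemma hasDerivAt_adjoint_rhs {x ψ : ℝ → ℝ} {s : ℝ} (hφ2 : DifferentiableAt ℝ (deriv φ) (x s))
    (hx : HasDerivAt x (-φ (x s) - g) s) (hψ : HasDerivAt ψ (-1 + ψ s * deriv φ (x s)) s) :
    HasDerivAt (fun r => -1 + ψ r * deriv φ (x r))
      ((-1 + ψ s * deriv φ (x s)) * deriv φ (x s)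
        + ψ s * (deriv (deriv φ) (x s) * (-φ (x s) - g))) s := by
  simpa using (hψ.mul (hφ2.hasDerivAt.comp s hx)).const_add (-1)

lemma adjoint_second_deriv_neg (hφ0 : φ 0 = 0) (hφ' : ∀ y, 0 < deriv φ y)
    (hφ''pos : ∀ y, 0 < y → 0 < deriv (deriv φ) y) (hg : 0 < g) {y p : ℝ} (hy : 0 < y)
    (hp : 0 < p) (hrhs : -1 + p * deriv φ y ≤ 0) :
    (-1 + p * deriv φ y) * deriv φ y + p * (deriv (deriv φ) y * (-φ y - g)) < 0 := by
  have h1 : (-1 + p * deriv φ y) * deriv φ y ≤ 0 := mul_nonpos_of_nonpos_of_nonneg hrhs (hφ' y).le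
  have h2 : p * (deriv (deriv φ) y * (-φ y - g)) < 0 :=
    mul_neg_of_pos_of_neg hp (mul_neg_of_pos_of_neg (hφ''pos y hy)
      (neg_friction_sub_neg hφ0 hφ' hg hy))
  linarith

end Friction

theorem stmt_10_general (φ : ℝ → ℝ) (g : ℝ)
    (hφ0 : φ 0 = 0)
    (hφ' : ∀ y : ℝ, 0 < deriv φ y)
    (hφC2 : ContDiffOn ℝ 2 φ {(0:ℝ)}ᶜ)
    (hφ''pos : ∀ y : ℝ, 0 < y → 0 < deriv (deriv φ) y)
    (hg0 : 0 < g)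
    (α : ℝ) (hα : 0 < α)
    (t' t'' : ℝ)
    (x ψ : ℝ → ℝ)
    (hx : ∀ t ∈ Set.Icc t' t'', HasDerivAt x (-(φ (x t)) - g) t)
    (hψ : ∀ t ∈ Set.Icc t' t'', HasDerivAt ψ (-1 + ψ t * deriv φ (x t)) t)
    (hψt' : ψ t' = α)
    (hright : ∃ ε > 0, ∀ t ∈ Set.Ioo t' (t' + ε), ψ t < α)
    (hψpos : ∀ t ∈ Set.Ioo t' t'', 0 < ψ t)
    (hxpos : ∀ t ∈ Set.Ioo t' t'', 0 < x t) :
    ∀ t ∈ Set.Ioo t' t'',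
      DifferentiableAt ℝ (deriv ψ) t ∧ deriv (deriv ψ) t < 0 := by
  intro t ht
  set F := fun r => -1 + ψ r * deriv φ (x r)
  set F' := fun r => F r * deriv φ (x r) + ψ r * (deriv (deriv φ) (x r) * (-φ (x r) - g))
  have hsub : Icc t' t ⊆ Icc t' t'' := Icc_subset_Icc_right ht.2.le
  have hxt' : x t < x t' := lt_of_hasDerivAt_neg ht.1 (fun r hr => hx r (hsub hr))
    fun r hr => neg_friction_sub_neg hφ0 hφ' hg0 (hxpos r ⟨hr.1, hr.2.trans ht.2⟩)
  have hpos : ∀ s ∈ Icc t' t, 0 < x s ∧ 0 < ψ s := by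
    rintro s ⟨hs₁, hs₂⟩
    rcases hs₁.eq_or_lt with rfl | hs₁
    · exact ⟨(hxpos t ht).trans hxt', hψt' ▸ hα⟩
    · exact ⟨hxpos s ⟨hs₁, hs₂.trans_lt ht.2⟩, hψpos s ⟨hs₁, hs₂.trans_lt ht.2⟩⟩
  have hF : ∀ s ∈ Icc t' t, HasDerivAt F (F' s) s := fun s hs =>
    hasDerivAt_adjoint_rhs (differentiableAt_deriv_of_ne_zero hφC2 (hpos s hs).1.ne')
      (hx s (hsub hs)) (hψ s (hsub hs))
  have hF'_neg : ∀ s ∈ Icc t' t, F s ≤ 0 → F' s < 0 := fun s hs =>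
    adjoint_second_deriv_neg hφ0 hφ' hφ''pos hg0 (hpos s hs).1 (hpos s hs).2
  have hFt' : F t' ≤ 0 := by
    obtain ⟨ε, hε, hεψ⟩ := hright
    refine (hψ t' (left_mem_Icc.2 (ht.1.trans ht.2).le)).nonpos_of_isLocalMaxOn_Ici ?_
    filter_upwards [Ico_mem_nhdsGE (by linarith : t' < t' + ε)] with s hs
    rcases hs.1.eq_or_lt with rfl | hs₁
    · rfl
    · exact hψt' ▸ (hεψ s ⟨hs₁, hs.2⟩).le
  -- `F` cannot cross zero upwards, since `F' < 0` wherever `F = 0`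
  have hFt : F t ≤ 0 :=
    image_le_of_deriv_right_lt_deriv_boundary' (B := 0) (B' := 0)
      (fun s hs => (hF s hs).continuousAt.continuousWithinAt)
      (fun s hs => (hF s (Ico_subset_Icc_self hs)).hasDerivWithinAt) hFt' continuousOn_const
      (fun _ _ => hasDerivWithinAt_const _ _ _)
      (fun s hs hFs => hF'_neg s (Ico_subset_Icc_self hs) hFs.le)
      (right_mem_Icc.2 ht.1.le)
  have hψ'' : HasDerivAt (deriv ψ) (F' t) t := by
    refine (hF t (right_mem_Icc.2 ht.1.le)).congr_of_eventuallyEq ?_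
    filter_upwards [Ioo_mem_nhds ht.1 ht.2] with s hs using (hψ s (Ioo_subset_Icc_self hs)).deriv
  exact ⟨hψ''.differentiableAt, hψ''.deriv ▸ hF'_neg t (right_mem_Icc.2 ht.1.le) hFt⟩

/-- On a u = 0 arc starting at the level ψ = α, while the velocity
    stays positive until it vanishes, ψ is strictly concave (ψ'' < 0). -/
theorem stmt_10 (φ : ℝ → ℝ) (g xmin xmax : ℝ)
    (hφ0 : φ 0 = 0)
    (hφdiff : Differentiable ℝ φ)
    (hφ' : ∀ y : ℝ, 0 < deriv φ y)
    (hφC2 : ContDiffOn ℝ 2 φ {(0:ℝ)}ᶜ)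
    (hφ''neg : ∀ y : ℝ, y < 0 → deriv (deriv φ) y < 0)
    (hφ''pos : ∀ y : ℝ, 0 < y → 0 < deriv (deriv φ) y)
    (hg0 : 0 < g) (hg1 : g < 1)
    (hxminneg : xmin < 0) (hxmaxpos : 0 < xmax)
    (hmin : φ xmin = -g) (hmax : φ xmax = 1 - g)
    (α : ℝ) (hα : 0 < α)
    (t' t'' : ℝ) (ht : t' < t'')
    (x ψ : ℝ → ℝ)
    (hx : ∀ t ∈ Set.Icc t' t'', HasDerivAt x (-(φ (x t)) - g) t)
    (hψ : ∀ t ∈ Set.Icc t' t'', HasDerivAt ψ (-1 + ψ t * deriv φ (x t)) t)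
    (hψt' : ψ t' = α)
    (hright : ∃ ε > 0, ∀ t ∈ Set.Ioo t' (t' + ε), ψ t < α)
    (hψpos : ∀ t ∈ Set.Ioo t' t'', 0 < ψ t)
    (hxpos : ∀ t ∈ Set.Ioo t' t'', 0 < x t)
    (hxt'' : x t'' = 0) :
    ∀ t ∈ Set.Ioo t' t'',
      DifferentiableAt ℝ (deriv ψ) t ∧ deriv (deriv ψ) t < 0 :=
  stmt_10_general φ g hφ0 hφ' hφC2 hφ''pos hg0 α hα t' t'' x ψ hx hψ hψt' hright hψpos hxpos
end

section
/- Let t' < t'' and let x, ψ : [t',t''] → ℝ be differentiable with x'(t) = −φ(x(t)) − g and ψ'(t) = −1 + ψ(t)·(b·|x(t)| + k) on (t',t'') (dynamics with control u = 0). Let t̄ ∈ (t',t'') be such that: x(t) > 0 on (t', t̄); x(t̄) = 0; x(t) ∈ (x_min, 0) for all t ∈ (t̄, t''); ψ'(t) < 0 on some left neighbourhood of t̄; and ψ(t̄) ≤ k/(k² + bg) (equivalently, the right second derivative of ψ at t̄ is ≤ 0). Then ψ is twice differentiable on (t̄, t'') and ψ''(t) < 0 for all t ∈ (t̄, t'').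 -/
/-! On `(t̄, t'')` the velocity is negative, so differentiating the adjoint equation once more gives
`ψ'' = -(k - b x) + ψ · (k² - b k x + b² x² / 2 + b g)`, and the bracket is positive.
Since `x > x_min > -g/k`, this is negative as soon as `ψ ≤ k / (k² + b g)`. That bound propagates
forward from `t̄`: whenever `ψ` touches the level `k / (k² + b g)` on `[t̄, t'')`, the adjoint
equation and `k (b |x| + k) < k² + b g` make `ψ' < 0`, so `ψ` cannot cross it. -/

open Set

lemma le_const_of_hasDerivAt_neg_at_level {f f' : ℝ → ℝ} {a T C : ℝ}
    (hf : ∀ τ ∈ Ico a T, HasDerivAt f (f' τ) τ) (ha : f a ≤ C)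
    (hlevel : ∀ τ ∈ Ico a T, f τ = C → f' τ < 0) :
    ∀ τ ∈ Ico a T, f τ ≤ C := by
  intro τ hτ
  have hsub : Icc a τ ⊆ Ico a T := Icc_subset_Ico_right hτ.2
  refine image_le_of_deriv_right_lt_deriv_boundary' (B := fun _ => C) (B' := fun _ => 0)
    (fun y hy => (hf y (hsub hy)).continuousAt.continuousWithinAt)
    (fun y hy => (hf y (hsub (Ico_subset_Icc_self hy))).hasDerivWithinAt) ha
    continuousOn_const (fun _ _ => hasDerivWithinAt_const _ _ _)
    (fun y hy => hlevel y (hsub (Ico_subset_Icc_self hy))) ⟨hτ.1, le_rfl⟩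

section QuadraticFriction

variable {b k g : ℝ}

lemma neg_div_lt_sub_sqrt_div (hb : 0 < b) (hk : 0 < k) (hg : 0 < g) :
    -(g / k) < (k - √(k ^ 2 + 2 * b * g)) / b := by
  have hroot : √(k ^ 2 + 2 * b * g) < k + b * g / k := by
    have hsq : (k + b * g / k) ^ 2 = k ^ 2 + 2 * b * g + (b * g / k) ^ 2 := by
      field_simp
      ring
    rw [Real.sqrt_lt' (by positivity), hsq]
    have : 0 < b * g / k := by positivity
    nlinarith
  rw [lt_div_iff₀ hb]
  have : b * g / k = g / k * b := by ring
  linarith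

lemma neg_lt_mul_of_neg_div_lt (hk : 0 < k) {y : ℝ} (hy : -(g / k) < y) : -g < k * y := by
  have h := mul_lt_mul_of_pos_left hy hk
  rwa [mul_neg, mul_div_cancel₀ g hk.ne'] at h

lemma mul_abs_add_lt (hb : 0 < b) (hk : 0 < k) {y : ℝ} (hy : -(g / k) < y) (hy0 : y ≤ 0) :
    k * (b * |y| + k) < k ^ 2 + b * g := by
  rw [abs_of_nonpos hy0]
  nlinarith [neg_lt_mul_of_neg_div_lt hk hy]

lemma hasDerivAt_deriv_of_adjoint {x ψ : ℝ → ℝ} {U : Set ℝ} (hU : IsOpen U) {t : ℝ} (ht : t ∈ U)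
    (hx : HasDerivAt x (b / 2 * x t ^ 2 - k * x t - g) t)
    (hψ : ∀ τ ∈ U, HasDerivAt ψ (-1 + ψ τ * (k - b * x τ)) τ) :
    HasDerivAt (deriv ψ)
      (-(k - b * x t) + ψ t * (k ^ 2 - b * k * x t + b ^ 2 / 2 * x t ^ 2 + b * g)) t := by
  have hderiv : deriv ψ =ᶠ[nhds t] fun τ => -1 + ψ τ * (k - b * x τ) :=
    Filter.eventually_of_mem (hU.mem_nhds ht) fun τ hτ => (hψ τ hτ).deriv
  refine HasDerivAt.congr_of_eventuallyEq ?_ hderiv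
  refine (((hψ t ht).mul ((hx.const_mul b).const_sub k)).const_add (-1)).congr_deriv ?_
  ring

lemma adjoint_second_deriv_neg_s11 (hb : 0 < b) (hk : 0 < k) (hg : 0 < g) {y p : ℝ}
    (hy : -(g / k) < y) (hy0 : y < 0) (hp : p ≤ k / (k ^ 2 + b * g)) :
    -(k - b * y) + p * (k ^ 2 - b * k * y + b ^ 2 / 2 * y ^ 2 + b * g) < 0 := by
  have hB : 0 < k ^ 2 - b * k * y + b ^ 2 / 2 * y ^ 2 + b * g := by
    nlinarith [mul_pos hb hk, mul_pos hb hg]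
  have hden : 0 < k ^ 2 + b * g := by positivity
  -- `(k - b y) (k² + b g) - k (k² - b k y + b² y² / 2 + b g) = -(b² y / 2) (2 g + k y)`
  have hgap : 0 < -(b ^ 2 * y / 2) * (2 * g + k * y) :=
    mul_pos (by nlinarith [mul_pos hb hb]) (by linarith [neg_lt_mul_of_neg_div_lt hk hy])
  calc -(k - b * y) + p * (k ^ 2 - b * k * y + b ^ 2 / 2 * y ^ 2 + b * g)
      ≤ -(k - b * y) + k / (k ^ 2 + b * g) * (k ^ 2 - b * k * y + b ^ 2 / 2 * y ^ 2 + b * g) := by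
        gcongr
    _ < 0 := by
      rw [div_mul_eq_mul_div, neg_add_lt_iff_lt_add, add_zero, div_lt_iff₀ hden]
      linear_combination hgap

lemma adjoint_le_of_le_left (hb : 0 < b) (hk : 0 < k) (hg : 0 < g) {x ψ : ℝ → ℝ} {a T : ℝ}
    (hψ : ∀ τ ∈ Ico a T, HasDerivAt ψ (-1 + ψ τ * (b * |x τ| + k)) τ)
    (hx : ∀ τ ∈ Ico a T, -(g / k) < x τ ∧ x τ ≤ 0) (ha : ψ a ≤ k / (k ^ 2 + b * g)) :
    ∀ τ ∈ Ico a T, ψ τ ≤ k / (k ^ 2 + b * g) := by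
  refine le_const_of_hasDerivAt_neg_at_level hψ ha fun τ hτ hψτ => ?_
  rw [hψτ, div_mul_eq_mul_div, neg_add_lt_iff_lt_add, add_zero, div_lt_one (by positivity)]
  exact mul_abs_add_lt hb hk (hx τ hτ).1 (hx τ hτ).2

end QuadraticFriction

theorem stmt_11_general (b k g : ℝ) (hb : 0 < b) (hk : 0 < k) (hg0 : 0 < g)
    (φ : ℝ → ℝ)
    (hφ : ∀ y : ℝ, φ y = if 0 ≤ y then b / 2 * y ^ 2 + k * y else -(b / 2) * y ^ 2 + k * y)
    (xmin : ℝ) (hxmin : xmin = (k - Real.sqrt (k ^ 2 + 2 * b * g)) / b)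
    (t' t'' : ℝ)
    (x ψ : ℝ → ℝ)
    (hx : ∀ t ∈ Set.Ioo t' t'', HasDerivAt x (-(φ (x t)) - g) t)
    (hψ : ∀ t ∈ Set.Ioo t' t'', HasDerivAt ψ (-1 + ψ t * (b * |x t| + k)) t)
    (tb : ℝ) (htb : tb ∈ Set.Ioo t' t'')
    (hxtb : x tb = 0)
    (hxneg : ∀ t ∈ Set.Ioo tb t'', x t ∈ Set.Ioo xmin 0)
    (hψtb : ψ tb ≤ k / (k ^ 2 + b * g)) :
    ∀ t ∈ Set.Ioo tb t'',
      DifferentiableAt ℝ (deriv ψ) t ∧ deriv (deriv ψ) t < 0 := by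
  have hsub : Ico tb t'' ⊆ Ioo t' t'' := fun τ hτ => ⟨htb.1.trans_le hτ.1, hτ.2⟩
  have hx_range : ∀ τ ∈ Ico tb t'', -(g / k) < x τ ∧ x τ ≤ 0 := by
    have hxmin_gt : -(g / k) < xmin := hxmin ▸ neg_div_lt_sub_sqrt_div hb hk hg0
    rintro τ ⟨hτb, hτ⟩
    rcases hτb.eq_or_lt with rfl | hτb
    · rw [hxtb]
      exact ⟨neg_neg_of_pos (div_pos hg0 hk), le_rfl⟩
    · have := hxneg τ ⟨hτb, hτ⟩
      exact ⟨hxmin_gt.trans this.1, this.2.le⟩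
  have hψ_le : ∀ τ ∈ Ico tb t'', ψ τ ≤ k / (k ^ 2 + b * g) :=
    adjoint_le_of_le_left hb hk hg0 (fun τ hτ => hψ τ (hsub hτ)) hx_range hψtb
  intro t ht
  have hx_neg : ∀ τ ∈ Ioo tb t'', x τ < 0 := fun τ hτ => (hxneg τ hτ).2
  have hxt : HasDerivAt x (b / 2 * x t ^ 2 - k * x t - g) t := by
    convert hx t (hsub (Ioo_subset_Ico_self ht)) using 1
    rw [hφ, if_neg (hx_neg t ht).not_ge]
    ring
  have hψ_neg : ∀ τ ∈ Ioo tb t'', HasDerivAt ψ (-1 + ψ τ * (k - b * x τ)) τ := by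
    intro τ hτ
    convert hψ τ (hsub (Ioo_subset_Ico_self hτ)) using 3
    rw [abs_of_neg (hx_neg τ hτ)]
    ring
  have hD := hasDerivAt_deriv_of_adjoint isOpen_Ioo ht hxt hψ_neg
  have ht' : t ∈ Ico tb t'' := Ioo_subset_Ico_self ht
  exact ⟨hD.differentiableAt, hD.deriv ▸
    adjoint_second_deriv_neg_s11 hb hk hg0 (hx_range t ht').1 (hx_neg t ht) (hψ_le t ht')⟩

/-- quadratic friction: after the velocity crosses zero on a u = 0
    arc, if ψ(t̄) ≤ k/(k² + bg) then ψ'' < 0 on (t̄, t''). -/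
theorem stmt_11 (b k g : ℝ) (hb : 0 < b) (hk : 0 < k) (hg0 : 0 < g) (hg1 : g < 1)
    (φ : ℝ → ℝ)
    (hφ : ∀ y : ℝ, φ y = if 0 ≤ y then b / 2 * y ^ 2 + k * y else -(b / 2) * y ^ 2 + k * y)
    (xmin : ℝ) (hxmin : xmin = (k - Real.sqrt (k ^ 2 + 2 * b * g)) / b)
    (t' t'' : ℝ) (ht : t' < t'')
    (x ψ : ℝ → ℝ)
    (hxdiff : DifferentiableOn ℝ x (Set.Icc t' t''))
    (hψdiff : DifferentiableOn ℝ ψ (Set.Icc t' t''))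
    (hx : ∀ t ∈ Set.Ioo t' t'', HasDerivAt x (-(φ (x t)) - g) t)
    (hψ : ∀ t ∈ Set.Ioo t' t'', HasDerivAt ψ (-1 + ψ t * (b * |x t| + k)) t)
    (tb : ℝ) (htb : tb ∈ Set.Ioo t' t'')
    (hxpos : ∀ t ∈ Set.Ioo t' tb, 0 < x t)
    (hxtb : x tb = 0)
    (hxneg : ∀ t ∈ Set.Ioo tb t'', x t ∈ Set.Ioo xmin 0)
    (hleft : ∃ ε > 0, ∀ t ∈ Set.Ioo (tb - ε) tb, deriv ψ t < 0)
    (hψtb : ψ tb ≤ k / (k ^ 2 + b * g)) :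
    ∀ t ∈ Set.Ioo tb t'',
      DifferentiableAt ℝ (deriv ψ) t ∧ deriv (deriv ψ) t < 0 :=
  stmt_11_general b k g hb hk hg0 φ hφ xmin hxmin t' t'' x ψ hx hψ tb htb hxtb hxneg hψtb
end

section
/- Nonexistence of type-III extremals for quadratic friction: there do not exist a real α with 0 < α < 1/k, times 0 < t₁ < t₂ < t₃ < T, and continuous functions x, ψ : [0,T] → ℝ such that: (i) ψ is differentiable on [0,T] with ψ'(t) = −1 + ψ(t)·(b·|x(t)| + k) for all t, and ψ(T) = 0; (ii) x(0) = 0 and x is differentiable on each open interval (0,t₁), (t₁,t₂), (t₂,t₃), (t₃,T), with x'(t) = 1 − φ(x(t)) − g on (0,t₁) ∪ (t₂,t₃) and x'(t) = −φ(x(t)) − g on (t₁,t₂) ∪ (t₃,T); (iii) ψ(t₁) = ψ(t₂) = ψ(t₃) = α, ψ(t) > α for t ∈ (0,t₁) ∪ (t₂,t₃), and ψ(t) < α for t ∈ (t₁,t₂) ∪ (t₃,T). (This is the bang-bang control pattern u = (1,0,1,0) with three switching points; such trajectories of type III do not satisfy the Pontryagin maximum principle.) -/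
/-!
Along an arc with constant control `u`, the state and adjoint equations conserve the Hamiltonian
`ψ (φ x + g - u) - x`. As `ψ = α` at the switching times and `ψ T = 0`, chaining the last three
arcs gives `H (x t₂) = H (x t₁)` and `H (x t₂) = -x T` for `H z = α (φ z + g) - z`.
The first arc keeps `x ≥ 0`, and `ψ` reaching `α` from above at `t₁` gives `α φ' (x t₁) ≤ 1`.
The equilibrium `x_min` of the coasting dynamics is never reached, so `x` decreases strictly
on the second arc while staying above `x_min`, and `x T ≥ x_min`. But `H` is strictly decreasing
on `[0, x t₁]` and strictly concave on `[x_min, 0]`, so `H (x t₂) > min (H (x t₁)) (-x_min)`,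
whereas the two identities give `H (x t₂) = H (x t₁)` and `H (x t₂) ≤ -x_min`.
-/

open Set Filter Topology

theorem HasDerivAt.nonpos_of_ge_on_left {f : ℝ → ℝ} {f' a t₀ : ℝ} (hf : HasDerivAt f f' t₀)
    (ha : a < t₀) (hge : ∀ t ∈ Ioo a t₀, f t₀ ≤ f t) : f' ≤ 0 := by
  have hslope : Tendsto (slope f t₀) (𝓝[<] t₀) (𝓝 f') :=
    hf.tendsto_slope.mono_left (nhdsWithin_mono _ fun _ ht => ne_of_lt ht)
  refine le_of_tendsto hslope ?_
  filter_upwards [Ioo_mem_nhdsLT ha] with t ht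
  rw [slope_def_field]
  exact div_nonpos_of_nonneg_of_nonpos (sub_nonneg.2 (hge t ht)) (sub_nonpos.2 ht.2.le)

theorem image_ge_of_hasDerivAt_nonneg_below {f f' : ℝ → ℝ} {a b M : ℝ}
    (hc : ContinuousOn f (Icc a b)) (hd : ∀ t ∈ Ioo a b, HasDerivAt f (f' t) t)
    (ha : M ≤ f a) (hf' : ∀ t ∈ Ioo a b, f t < M → 0 ≤ f' t) : ∀ t ∈ Icc a b, M ≤ f t := by
  intro t' ht'
  by_contra! hlt
  set S := Icc a t' ∩ f ⁻¹' Ici M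
  have hS : IsClosed S :=
    (hc.mono (Icc_subset_Icc_right ht'.2)).preimage_isClosed_of_isClosed isClosed_Icc isClosed_Ici
  have haS : a ∈ S := ⟨⟨le_rfl, ht'.1⟩, ha⟩
  have hbdd : BddAbove S := ⟨t', fun t ht => ht.1.2⟩
  -- `sSup S` is the last time before `t'` at which `f ≥ M`
  obtain ⟨⟨haτ, hτt'⟩, hτ⟩ : sSup S ∈ S := hS.csSup_mem ⟨a, haS⟩ hbdd
  have hbelow : ∀ t ∈ Ioc (sSup S) t', f t < M := fun t ht =>
    not_le.1 fun h => (le_csSup hbdd ⟨⟨haτ.trans ht.1.le, ht.2⟩, h⟩).not_gt ht.1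
  have hmono : MonotoneOn f (Icc (sSup S) t') := by
    refine monotoneOn_of_hasDerivWithinAt_nonneg (f' := f') (convex_Icc _ _)
      (hc.mono (Icc_subset_Icc haτ ht'.2)) (fun t ht => ?_) fun t ht => ?_
    all_goals rw [interior_Icc] at ht
    · exact (hd t ⟨haτ.trans_lt ht.1, ht.2.trans_le ht'.2⟩).hasDerivWithinAt
    · exact hf' t ⟨haτ.trans_lt ht.1, ht.2.trans_le ht'.2⟩ (hbelow t ⟨ht.1, ht.2.le⟩)
  exact hlt.not_ge (hτ.trans (hmono ⟨le_rfl, hτt'⟩ ⟨hτt', le_rfl⟩ hτt'))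

theorem pos_of_hasDerivAt_ge_neg_mul {f f' : ℝ → ℝ} {a b L : ℝ}
    (hc : ContinuousOn f (Icc a b)) (hd : ∀ t ∈ Ioo a b, HasDerivAt f (f' t) t)
    (ha : 0 < f a) (hf' : ∀ t ∈ Ioo a b, -(L * f t) ≤ f' t) : ∀ t ∈ Icc a b, 0 < f t := by
  have hmono : MonotoneOn (fun t => f t * Real.exp (L * t)) (Icc a b) := by
    refine monotoneOn_of_hasDerivWithinAt_nonneg
      (f' := fun t => f' t * Real.exp (L * t) + f t * (Real.exp (L * t) * L)) (convex_Icc a b)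
      (hc.mul (by fun_prop)) (fun t ht => ?_) fun t ht => ?_
    all_goals rw [interior_Icc] at ht
    · have hexp : HasDerivAt (fun t => Real.exp (L * t)) (Real.exp (L * t) * L) t := by
        simpa using ((hasDerivAt_id' t).const_mul L).exp
      exact ((hd t ht).mul hexp).hasDerivWithinAt
    · have := hf' t ht
      have := Real.exp_pos (L * t)
      nlinarith
  intro t ht
  have h := hmono ⟨le_rfl, ht.1.trans ht.2⟩ ht ht.1
  simp only at h
  exact pos_of_mul_pos_left ((mul_pos ha (Real.exp_pos _)).trans_le h) (Real.exp_pos _).le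

theorem hamiltonian_eq_of_adjoint {φ φ' x ψ : ℝ → ℝ} {c s e : ℝ} (hse : s ≤ e)
    (hφ : ∀ y, HasDerivAt φ (φ' y) y) (hxc : ContinuousOn x (Icc s e))
    (hψc : ContinuousOn ψ (Icc s e)) (hψ : ∀ t ∈ Ioo s e, HasDerivAt ψ (-1 + ψ t * φ' (x t)) t)
    (hx : ∀ t ∈ Ioo s e, HasDerivAt x (c - φ (x t)) t) :
    ψ e * (φ (x e) - c) - x e = ψ s * (φ (x s) - c) - x s := by
  obtain rfl | hlt := hse.eq_or_lt
  · rfl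
  have hφc : Continuous φ := continuous_iff_continuousAt.2 fun y => (hφ y).continuousAt
  obtain ⟨τ, -, hτ⟩ := exists_hasDerivAt_eq_slope (fun t => ψ t * (φ (x t) - c) - x t) (fun _ => 0)
    hlt ((hψc.mul ((hφc.comp_continuousOn hxc).sub continuousOn_const)).sub hxc) fun t ht =>
      (((hψ t ht).mul (((hφ (x t)).comp t (hx t ht)).sub_const c)).sub
        (hx t ht)).congr_deriv (by simp only [Function.comp_apply]; ring)
  rw [eq_comm, div_eq_zero_iff, sub_eq_zero] at hτ
  exact hτ.resolve_right (sub_ne_zero.2 hlt.ne')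

theorem Monotone.ge_of_hasDerivAt_sub {φ x : ℝ → ℝ} {c x₀ s e : ℝ} (hφ : Monotone φ)
    (hx₀ : φ x₀ ≤ c) (hxc : ContinuousOn x (Icc s e))
    (hx : ∀ t ∈ Ioo s e, HasDerivAt x (c - φ (x t)) t) (hs : x₀ ≤ x s) :
    ∀ t ∈ Icc s e, x₀ ≤ x t :=
  image_ge_of_hasDerivAt_nonneg_below hxc hx hs fun _ _ hlt =>
    sub_nonneg.2 ((hφ hlt.le).trans hx₀)

noncomputable def quadFriction (b k y : ℝ) : ℝ := b / 2 * (y * |y|) + k * y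

noncomputable def xMin (b k g : ℝ) : ℝ := (k - √(k ^ 2 + 2 * b * g)) / b

theorem hasDerivAt_mul_abs (y : ℝ) : HasDerivAt (fun z : ℝ => z * |z|) (2 * |y|) y := by
  refine hasDerivAt_of_hasDerivAt_of_ne' (f := fun z => z * |z|) (g := fun z => 2 * |z|) (x := 0)
    (fun z hz => ?_) (by fun_prop) (by fun_prop) y
  refine ((hasDerivAt_id' z).mul (hasDerivAt_abs hz)).congr_deriv ?_
  rw [self_mul_sign]
  ring

section QuadFriction

variable {b k : ℝ}

theorem quadFriction_eq_ite (y : ℝ) :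
    quadFriction b k y = if 0 ≤ y then b / 2 * y ^ 2 + k * y else -(b / 2) * y ^ 2 + k * y := by
  split_ifs with hy
  · rw [quadFriction, abs_of_nonneg hy]; ring
  · rw [quadFriction, abs_of_neg (not_le.1 hy)]; ring

@[simp]
theorem quadFriction_zero : quadFriction b k 0 = 0 := by simp [quadFriction]

theorem hasDerivAt_quadFriction (y : ℝ) : HasDerivAt (quadFriction b k) (b * |y| + k) y := by
  unfold quadFriction
  exact (((hasDerivAt_mul_abs y).const_mul (b / 2)).add
    ((hasDerivAt_id' y).const_mul k)).congr_deriv (by ring)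

theorem quadFriction_strictMono (hb : 0 ≤ b) (hk : 0 < k) : StrictMono (quadFriction b k) :=
  strictMono_of_hasDerivAt_pos hasDerivAt_quadFriction fun y => by positivity

theorem quadFriction_sub_le (hb : 0 ≤ b) {w z : ℝ} (hwz : w ≤ z) :
    quadFriction b k z - quadFriction b k w ≤ (b / 2 * (|z| + |w|) + k) * (z - w) := by
  have key : z * |z| - w * |w| ≤ (|z| + |w|) * (z - w) := by
    rcases le_total 0 w with hw | hw <;> rcases le_total 0 z with hz | hz <;>
      simp only [abs_of_nonneg, abs_of_nonpos, *] <;> nlinarith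
  have := mul_le_mul_of_nonneg_left key (by positivity : 0 ≤ b / 2)
  simp only [quadFriction]
  nlinarith

theorem quadFriction_xMin {g : ℝ} (hb : 0 < b) (hg : 0 ≤ g) :
    quadFriction b k (xMin b k g) = -g := by
  have hs : k ≤ √(k ^ 2 + 2 * b * g) := Real.le_sqrt_of_sq_le (by nlinarith)
  have hsq := Real.sq_sqrt (by positivity : 0 ≤ k ^ 2 + 2 * b * g)
  have hx : xMin b k g ≤ 0 := div_nonpos_of_nonpos_of_nonneg (by linarith) hb.le
  rw [quadFriction, abs_of_nonpos hx, xMin]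
  set s := √(k ^ 2 + 2 * b * g)
  field_simp
  linear_combination -hsq

theorem xMin_neg {g : ℝ} (hb : 0 < b) (hg : 0 < g) : xMin b k g < 0 := by
  have hs : k < √(k ^ 2 + 2 * b * g) := Real.lt_sqrt_of_sq_lt (by nlinarith [mul_pos hb hg])
  exact div_neg_of_neg_of_pos (by linarith) hb

end QuadFriction

section Coasting

variable {α b k g : ℝ}

theorem coast_strictAntiOn_and_xMin_lt {x : ℝ → ℝ} {s e : ℝ} (hb : 0 < b) (hk : 0 < k)
    (hg : 0 ≤ g) (hxc : ContinuousOn x (Icc s e))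
    (hx : ∀ t ∈ Ioo s e, HasDerivAt x (-g - quadFriction b k (x t)) t) (hs : xMin b k g < x s) :
    StrictAntiOn x (Icc s e) ∧ ∀ t ∈ Icc s e, xMin b k g < x t := by
  set xm := xMin b k g
  have hφxm : quadFriction b k xm = -g := quadFriction_xMin hb hg
  have hφ := quadFriction_strictMono hb.le hk
  have hge : ∀ t ∈ Icc s e, xm ≤ x t :=
    hφ.monotone.ge_of_hasDerivAt_sub hφxm.le hxc hx hs.le
  obtain ⟨C, hC⟩ := isCompact_Icc.exists_bound_of_continuousOn hxc
  -- `xm` is an equilibrium and the friction is Lipschitz on bounded sets: it is not reached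
  have hgt : ∀ t ∈ Icc s e, 0 < x t - xm := by
    refine pos_of_hasDerivAt_ge_neg_mul (L := b / 2 * (C + |xm|) + k)
      (hxc.sub continuousOn_const) (fun t ht => (hx t ht).sub_const xm) (sub_pos.2 hs)
      fun t ht => ?_
    have hxt := hge t (Ioo_subset_Icc_self ht)
    have hlip := quadFriction_sub_le (k := k) hb.le hxt
    have hCt : |x t| ≤ C := by simpa using hC t (Ioo_subset_Icc_self ht)
    rw [hφxm] at hlip
    nlinarith [mul_le_mul_of_nonneg_right hCt (mul_nonneg hb.le (sub_nonneg.2 hxt))]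
  refine ⟨strictAntiOn_of_hasDerivWithinAt_neg (f' := fun t => -g - quadFriction b k (x t))
    (convex_Icc s e) hxc (fun t ht => ?_) fun t ht => ?_, fun t ht => sub_pos.1 (hgt t ht)⟩ <;>
    rw [interior_Icc] at ht
  · exact (hx t ht).hasDerivWithinAt
  · rw [← hφxm, sub_neg]
    exact hφ (sub_pos.1 (hgt t (Ioo_subset_Icc_self ht)))

theorem mul_quadFriction_sub_strictAntiOn {x₁ : ℝ} (hα : 0 < α) (hb : 0 < b)
    (hswitch : α * (b * x₁ + k) ≤ 1) :
    StrictAntiOn (fun z => α * quadFriction b k z - z) (Icc 0 x₁) := by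
  rintro u ⟨hu, -⟩ v ⟨hv, hvx⟩ huv
  simp only [quadFriction, abs_of_nonneg hu, abs_of_nonneg hv]
  nlinarith [mul_pos (mul_pos hα hb) (mul_pos (sub_pos.2 huv) (by linarith : 0 < 2 * x₁ - u - v)),
    mul_nonneg (sub_nonneg.2 hswitch) (sub_pos.2 huv).le]

theorem min_lt_mul_quadFriction_add_sub {z : ℝ} (hα : 0 < α) (hb : 0 < b) (hg : 0 ≤ g)
    (hz : xMin b k g < z) (hz0 : z < 0) :
    min (α * g) (-xMin b k g) < α * (quadFriction b k z + g) - z := by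
  set xm := xMin b k g
  have hxm : quadFriction b k xm = -g := quadFriction_xMin hb hg
  rw [quadFriction, abs_of_neg (hz.trans hz0)] at hxm
  rw [quadFriction, abs_of_neg hz0, min_lt_iff]
  by_contra! h
  have hbelow : 1 ≤ α * k - α * (b / 2) * z := by
    by_contra! hlt
    nlinarith [mul_pos (neg_pos.2 hz0) (sub_pos.2 hlt)]
  have habove : α * k - α * (b / 2) * (xm + z) ≤ 1 := by
    by_contra! hlt
    nlinarith [mul_pos (sub_pos.2 hz) (sub_pos.2 hlt)]
  nlinarith [mul_pos (mul_pos hα hb) (neg_pos.2 (hz.trans hz0))]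

theorem min_lt_coast_hamiltonian {x₁ x₂ : ℝ} (hα : 0 < α) (hb : 0 < b) (hg : 0 ≤ g)
    (hx₁ : 0 ≤ x₁) (hswitch : α * (b * x₁ + k) ≤ 1) (hx₂ : xMin b k g < x₂) (hx₂₁ : x₂ < x₁) :
    min (α * (quadFriction b k x₁ + g) - x₁) (-xMin b k g) <
      α * (quadFriction b k x₂ + g) - x₂ := by
  have hanti := mul_quadFriction_sub_strictAntiOn hα hb hswitch
  rcases le_or_gt 0 x₂ with hx₂0 | hx₂0
  · have := hanti ⟨hx₂0, hx₂₁.le⟩ ⟨hx₁, le_rfl⟩ hx₂₁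
    exact min_lt_of_left_lt (by simp only at this; linarith)
  · have h0 := hanti.antitoneOn ⟨le_rfl, hx₁⟩ ⟨hx₁, le_rfl⟩ hx₁
    simp only [quadFriction_zero, mul_zero, sub_zero] at h0
    exact (min_le_min_right _ (by linarith)).trans_lt
      (min_lt_mul_quadFriction_add_sub hα hb hg hx₂ hx₂0)

end Coasting

/-- Nonexistence of type-III extremals (control pattern u = (1,0,1,0))
    for quadratic friction. -/
theorem stmt_13 (b k g : ℝ) (hb : 0 < b) (hk : 0 < k) (hg0 : 0 < g) (hg1 : g < 1)
    (φ : ℝ → ℝ)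
    (hφ : ∀ y : ℝ, φ y = if 0 ≤ y then b / 2 * y ^ 2 + k * y else -(b / 2) * y ^ 2 + k * y) :
    ¬ ∃ (α t₁ t₂ t₃ T : ℝ) (x ψ : ℝ → ℝ),
      0 < α ∧ α < 1 / k ∧
      0 < t₁ ∧ t₁ < t₂ ∧ t₂ < t₃ ∧ t₃ < T ∧
      ContinuousOn x (Set.Icc 0 T) ∧ ContinuousOn ψ (Set.Icc 0 T) ∧
      (∀ t ∈ Set.Icc (0:ℝ) T, HasDerivAt ψ (-1 + ψ t * (b * |x t| + k)) t) ∧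
      ψ T = 0 ∧
      x 0 = 0 ∧
      (∀ t ∈ Set.Ioo 0 t₁ ∪ Set.Ioo t₂ t₃, HasDerivAt x (1 - φ (x t) - g) t) ∧
      (∀ t ∈ Set.Ioo t₁ t₂ ∪ Set.Ioo t₃ T, HasDerivAt x (-(φ (x t)) - g) t) ∧
      ψ t₁ = α ∧ ψ t₂ = α ∧ ψ t₃ = α ∧
      (∀ t ∈ Set.Ioo 0 t₁ ∪ Set.Ioo t₂ t₃, α < ψ t) ∧
      (∀ t ∈ Set.Ioo t₁ t₂ ∪ Set.Ioo t₃ T, ψ t < α) := by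
  rintro ⟨α, t₁, t₂, t₃, T, x, ψ, hα, -, ht₁, h12, h23, h3T, hxc, hψc, hψ, hψT, hx0, hthrust,
    hcoast, hψ₁, hψ₂, hψ₃, hψgt, -⟩
  obtain rfl : φ = quadFriction b k := funext fun y => by rw [hφ, quadFriction_eq_ite]
  have hmono := (quadFriction_strictMono hb.le hk).monotone
  have thrust : ∀ t ∈ Ioo 0 t₁ ∪ Ioo t₂ t₃, HasDerivAt x (1 - g - quadFriction b k (x t)) t :=
    fun t ht => (hthrust t ht).congr_deriv (by ring)
  have coast : ∀ t ∈ Ioo t₁ t₂ ∪ Ioo t₃ T, HasDerivAt x (-g - quadFriction b k (x t)) t :=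
    fun t ht => (hcoast t ht).congr_deriv (by ring)
  have ham : ∀ {s e c : ℝ}, 0 ≤ s → s ≤ e → e ≤ T →
      (∀ t ∈ Ioo s e, HasDerivAt x (c - quadFriction b k (x t)) t) →
      ψ e * (quadFriction b k (x e) - c) - x e = ψ s * (quadFriction b k (x s) - c) - x s :=
    fun hs hse he => hamiltonian_eq_of_adjoint hse hasDerivAt_quadFriction
      (hxc.mono (Icc_subset_Icc hs he)) (hψc.mono (Icc_subset_Icc hs he))
      fun t ht => hψ t (Icc_subset_Icc hs he (Ioo_subset_Icc_self ht))
  have barrier : ∀ {s e c x₀ : ℝ}, 0 ≤ s → s ≤ e → e ≤ T → quadFriction b k x₀ ≤ c →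
      (∀ t ∈ Ioo s e, HasDerivAt x (c - quadFriction b k (x t)) t) → x₀ ≤ x s → x₀ ≤ x e :=
    fun hs hse he hc hx h₀ =>
      hmono.ge_of_hasDerivAt_sub hc (hxc.mono (Icc_subset_Icc hs he)) hx h₀ _ ⟨hse, le_rfl⟩
  have hx₁ : 0 ≤ x t₁ := barrier le_rfl ht₁.le (by linarith) (by rw [quadFriction_zero]; linarith)
    (fun t ht => thrust t (.inl ht)) hx0.ge
  have hswitch : α * (b * x t₁ + k) ≤ 1 := by
    have := (hψ t₁ ⟨ht₁.le, by linarith⟩).nonpos_of_ge_on_left ht₁ fun t ht =>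
      hψ₁ ▸ (hψgt t (.inl ht)).le
    rw [hψ₁, abs_of_nonneg hx₁] at this
    linarith
  obtain ⟨hanti, hx₂⟩ := coast_strictAntiOn_and_xMin_lt hb hk hg0.le
    (hxc.mono (Icc_subset_Icc ht₁.le (by linarith))) (fun t ht => coast t (.inl ht))
    ((xMin_neg hb hg0).trans_le hx₁)
  have hφxm := quadFriction_xMin (k := k) hb hg0.le
  have hxT : xMin b k g ≤ x T := barrier (by linarith) h3T.le le_rfl hφxm.le
    (fun t ht => coast t (.inr ht)) (barrier (by linarith) h23.le h3T.le (by linarith)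
      (fun t ht => thrust t (.inr ht)) (hx₂ t₂ ⟨h12.le, le_rfl⟩).le)
  have H₂ := ham ht₁.le h12.le (by linarith) fun t ht => coast t (.inl ht)
  have H₃ := ham (by linarith) h23.le h3T.le fun t ht => thrust t (.inr ht)
  have H₄ := ham (by linarith) h3T.le le_rfl fun t ht => coast t (.inr ht)
  simp only [hψ₁, hψ₂, hψ₃, hψT] at H₂ H₃ H₄
  rcases min_lt_iff.1 (min_lt_coast_hamiltonian hα hb hg0.le hx₁ hswitch
    (hx₂ t₂ ⟨h12.le, le_rfl⟩) (hanti ⟨le_rfl, h12.le⟩ ⟨h12.le, le_rfl⟩ h12)) with h | h <;>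
    linarith
end

section
/- Let α, b, g, k, z₀ be real numbers and set D(z) = 2bg − k² + z². Define ψ(z) = (α·D(z₀) + 2(z − z₀))/D(z) at all z with D(z) ≠ 0, and suppose D(z₀) ≠ 0. Then ψ(z₀) = α, and at every z with D(z) ≠ 0 the function ψ is differentiable with ψ'(z) = 2·(1 − z·ψ(z))/D(z). -/
/-! The equation `(c + z²) ψ' = 2 (1 - z ψ)` says exactly that `((c + z²) ψ)' = 2`, so its
solutions are `ψ = (C + 2 z) / (c + z²)`; the initial condition fixes `C`. -/

open Filter Topology

theorem hasDerivAt_linear_div_quadratic (c C z₀ z : ℝ) (hz : c + z ^ 2 ≠ 0) :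
    HasDerivAt (fun t => (C + 2 * (t - z₀)) / (c + t ^ 2))
      (2 * (1 - z * ((C + 2 * (z - z₀)) / (c + z ^ 2))) / (c + z ^ 2)) z := by
  have hnum : HasDerivAt (fun t => C + 2 * (t - z₀)) 2 z := by
    simpa using (((hasDerivAt_id z).sub_const z₀).const_mul 2).const_add C
  have hden : HasDerivAt (fun t => c + t ^ 2) (2 * z) z := by
    simpa [mul_comm] using (hasDerivAt_pow 2 z).const_add c
  refine (hnum.div hden hz).congr_deriv ?_
  field_simp

/-- Explicit solution of dψ/dz = 2(1 − ψz)/(2bg − k² + z²) with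
    ψ(z₀) = α. -/
theorem stmt_14 (α b g k z₀ : ℝ)
    (D : ℝ → ℝ) (hD : ∀ z : ℝ, D z = 2 * b * g - k ^ 2 + z ^ 2)
    (ψ : ℝ → ℝ)
    (hψ : ∀ z : ℝ, D z ≠ 0 → ψ z = (α * D z₀ + 2 * (z - z₀)) / D z)
    (hz₀ : D z₀ ≠ 0) :
    ψ z₀ = α ∧
    ∀ z : ℝ, D z ≠ 0 → HasDerivAt ψ (2 * (1 - z * ψ z) / D z) z := by
  refine ⟨by rw [hψ z₀ hz₀]; field_simp; ring, fun z hz => ?_⟩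
  have hD_cont : Continuous D := by
    rw [funext hD]
    fun_prop
  have hψ_eq : ψ =ᶠ[𝓝 z] fun t => (α * D z₀ + 2 * (t - z₀)) / (2 * b * g - k ^ 2 + t ^ 2) := by
    filter_upwards [hD_cont.continuousAt.eventually_ne hz] with t ht
    rw [hψ t ht, hD t]
  rw [hψ z hz, hD z]
  exact (hasDerivAt_linear_div_quadratic _ _ _ _ (hD z ▸ hz)).congr_of_eventuallyEq hψ_eq
end

section
/- Let b, k, g > 0 and x_min = (k − √(k² + 2bg))/b. For every x̂ with x_min < x̂ < 0, one has (k − b·x̂)² + b·(−(b/2)x̂² + k·x̂ + g) > 0 and (k − b·x̂) / ((k − b·x̂)² + b·(−(b/2)x̂² + k·x̂ + g)) > k/(k² + bg). -/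
/-! Expanding, the denominator is `D(x) = k² + bg - bkx + (b²/2)x²`, and
`(k - bx)(k² + bg) - k D(x) = -b²x (g + kx/2)`. For `x < 0` this is positive exactly when
`x > -2g/k`, and rationalising `x_min = -2g/(k + √(k² + 2bg))` shows `x_min > -2g/k`. -/

lemma friction_denom_eq (b k g x : ℝ) :
    (k - b * x) ^ 2 + b * (-(b / 2) * x ^ 2 + k * x + g) =
      k ^ 2 + b * g - b * k * x + b ^ 2 / 2 * x ^ 2 := by
  ring

lemma friction_denom_pos {b k g x : ℝ} (hb : 0 ≤ b) (hk : 0 ≤ k) (hkg : 0 < k ^ 2 + b * g)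
    (hx : x ≤ 0) : 0 < (k - b * x) ^ 2 + b * (-(b / 2) * x ^ 2 + k * x + g) := by
  rw [friction_denom_eq]
  have hlin : 0 ≤ -(b * k * x) := by nlinarith [mul_nonneg hb hk]
  have hquad : 0 ≤ b ^ 2 / 2 * x ^ 2 := by positivity
  linarith

lemma sub_sqrt_div_eq {b k g : ℝ} (hb : 0 < b) (hk : 0 < k) (hg : 0 ≤ g) :
    (k - √(k ^ 2 + 2 * b * g)) / b = -(2 * g) / (k + √(k ^ 2 + 2 * b * g)) := by
  have hsq : √(k ^ 2 + 2 * b * g) ^ 2 = k ^ 2 + 2 * b * g := Real.sq_sqrt (by positivity)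
  have hpos : 0 < k + √(k ^ 2 + 2 * b * g) := by positivity
  rw [div_eq_div_iff hb.ne' hpos.ne']
  linear_combination -hsq

lemma neg_two_mul_div_lt_sub_sqrt_div {b k g : ℝ} (hb : 0 < b) (hk : 0 < k) (hg : 0 < g) :
    -(2 * g) / k < (k - √(k ^ 2 + 2 * b * g)) / b := by
  have hk_lt : k < k + √(k ^ 2 + 2 * b * g) :=
    lt_add_of_pos_right k (Real.sqrt_pos.mpr (by positivity))
  rw [sub_sqrt_div_eq hb hk hg.le, neg_div, neg_div, neg_lt_neg_iff]
  exact div_lt_div_of_pos_left (by positivity) hk hk_lt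

lemma div_friction_denom_gt {b k g x : ℝ} (hb : 0 < b) (hk : 0 < k) (hg : 0 < g)
    (hx_gt : -(2 * g) / k < x) (hx_neg : x < 0) :
    k / (k ^ 2 + b * g) <
      (k - b * x) / ((k - b * x) ^ 2 + b * (-(b / 2) * x ^ 2 + k * x + g)) := by
  have hkg : 0 < k ^ 2 + b * g := by positivity
  have hD := friction_denom_pos hb.le hk.le hkg hx_neg.le
  have hgkx : 0 < g + k * x / 2 := by
    rw [div_lt_iff₀ hk] at hx_gt
    linarith
  have hcross : 0 < b ^ 2 * -x * (g + k * x / 2) := by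
    have := neg_pos.mpr hx_neg
    positivity
  rw [div_lt_div_iff₀ hkg hD, friction_denom_eq]
  linear_combination hcross

/-- For x_min < xhat < 0, the value of ψ at which ψ'' vanishes
    exceeds the threshold k/(k² + bg). -/
theorem stmt_16 (b k g : ℝ) (hb : 0 < b) (hk : 0 < k) (hg : 0 < g)
    (xmin : ℝ) (hxmin : xmin = (k - Real.sqrt (k ^ 2 + 2 * b * g)) / b) :
    ∀ xhat : ℝ, xmin < xhat → xhat < 0 →
      0 < (k - b * xhat) ^ 2 + b * (-(b / 2) * xhat ^ 2 + k * xhat + g) ∧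
      k / (k ^ 2 + b * g) <
        (k - b * xhat) / ((k - b * xhat) ^ 2 + b * (-(b / 2) * xhat ^ 2 + k * xhat + g)) := by
  intro xhat hxmin_lt hxhat_neg
  have hxhat_gt : -(2 * g) / k < xhat :=
    (neg_two_mul_div_lt_sub_sqrt_div hb hk hg).trans (hxmin ▸ hxmin_lt)
  exact ⟨friction_denom_pos hb.le hk.le (by positivity) hxhat_neg.le,
    div_friction_denom_gt hb hk hg hxhat_gt hxhat_neg⟩
end
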